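/- arXiv:math/0307255 — 3 statements merged into one kernel-verified Lean document; each statement's English description precedes it below -/
import Mathlib

section
/- Let C be a braided monoidal category with braiding c, and let H be an object of C admitting a left dual H* with evaluation d : H* ⊗ H → I and coevaluation b : I → H ⊗ H*. Then the following are equivalent: (i) the evaluation d is symmetric with respect to the braiding, i.e. (id ⊗ d)(c_{H*,U} ⊗ id) = (d ⊗ id)(id ⊗ c_{U,H}) for U = H and U = H*; (ii) c_{U,V} = c_{V,U}^{-1} for all U, V ∈ {H, H*}; (iii) c_{H,H} = c_{H,H}^{-1}. -/
open CategoryTheory Category MonoidalCategory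

namespace PaperDefs

variable {C : Type*} [Category C] [MonoidalCategory C] [BraidedCategory C]

/-- The middle-four interchange braiding `(W ⊗ X) ⊗ (Y ⊗ Z) ⟶ (W ⊗ Y) ⊗ (X ⊗ Z)`,
i.e. `id ⊗ c_{X,Y} ⊗ id`. -/
def midSwap (W X Y Z : C) : (W ⊗ X) ⊗ (Y ⊗ Z) ⟶ (W ⊗ Y) ⊗ (X ⊗ Z) :=
  (α_ W X (Y ⊗ Z)).hom ≫
    (W ◁ ((α_ X Y Z).inv ≫ ((β_ X Y).hom ▷ Z) ≫ (α_ Y X Z).hom)) ≫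
    (α_ W Y (X ⊗ Z)).inv

/-- An algebra (monoid) structure on an object of `C`. -/
structure AlgData (A : C) where
  mul : A ⊗ A ⟶ A
  one : 𝟙_ C ⟶ A
  mul_assoc : (α_ A A A).inv ≫ (mul ▷ A) ≫ mul = (A ◁ mul) ≫ mul
  one_mul : (λ_ A).inv ≫ (one ▷ A) ≫ mul = 𝟙 A
  mul_one : (ρ_ A).inv ≫ (A ◁ one) ≫ mul = 𝟙 A

/-- A bialgebra structure on an object of the braided category `C`. -/
structure BialgData (A : C) extends AlgData A where
  comul : A ⟶ A ⊗ A
  counit : A ⟶ 𝟙_ C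
  coassoc : comul ≫ (comul ▷ A) ≫ (α_ A A A).hom = comul ≫ (A ◁ comul)
  counit_comul : comul ≫ (counit ▷ A) ≫ (λ_ A).hom = 𝟙 A
  comul_counit : comul ≫ (A ◁ counit) ≫ (ρ_ A).hom = 𝟙 A
  mul_comul : mul ≫ comul = (comul ⊗ₘ comul) ≫ midSwap A A A A ≫ (mul ⊗ₘ mul)
  one_comul : one ≫ comul = (λ_ (𝟙_ C)).inv ≫ (one ⊗ₘ one)
  mul_counit : mul ≫ counit = (counit ⊗ₘ counit) ≫ (λ_ (𝟙_ C)).hom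
  one_counit : one ≫ counit = 𝟙 (𝟙_ C)

/-- A Hopf algebra structure on an object of the braided category `C`. -/
structure HopfData (A : C) extends BialgData A where
  antipode : A ⟶ A
  antipode_left : comul ≫ (antipode ▷ A) ≫ mul = counit ≫ one
  antipode_right : comul ≫ (A ◁ antipode) ≫ mul = counit ≫ one

/-- `Hs` is a left dual of `H`, with evaluation `d` and coevaluation `b`. -/
structure DualData (H Hs : C) where
  d : Hs ⊗ H ⟶ 𝟙_ C
  b : 𝟙_ C ⟶ H ⊗ Hs
  triangle_left : (ρ_ Hs).inv ≫ (Hs ◁ b) ≫ (α_ Hs H Hs).inv ≫ (d ▷ Hs) ≫ (λ_ Hs).hom = 𝟙 Hs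
  triangle_right : (λ_ H).inv ≫ (b ▷ H) ≫ (α_ H Hs H).hom ≫ (H ◁ d) ≫ (ρ_ H).hom = 𝟙 H

variable {H Hs : C}

/-- The induced pairing `(H* ⊗ H*) ⊗ (H ⊗ H) ⟶ I`, exhibiting `H* ⊗ H*` as left
dual of `H ⊗ H` (the convention `d_{U⊗V} = d_V (id ⊗ d_U ⊗ id)`). -/
def pairHH (d : Hs ⊗ H ⟶ 𝟙_ C) : (Hs ⊗ Hs) ⊗ (H ⊗ H) ⟶ 𝟙_ C :=
  (α_ Hs Hs (H ⊗ H)).hom ≫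
    (Hs ◁ ((α_ Hs H H).inv ≫ (d ▷ H) ≫ (λ_ H).hom)) ≫ d

/-- The induced coevaluation `I ⟶ (H ⊗ H) ⊗ (H* ⊗ H*)`. -/
def coevHH (b : 𝟙_ C ⟶ H ⊗ Hs) : 𝟙_ C ⟶ (H ⊗ H) ⊗ (Hs ⊗ Hs) :=
  b ≫ (H ◁ ((λ_ Hs).inv ≫ (b ▷ Hs) ≫ (α_ H Hs Hs).hom)) ≫ (α_ H H (Hs ⊗ Hs)).inv

/-- The convolution (dual) multiplication on `H*`: the transpose of the comultiplication. -/
def mulDual (dd : DualData H Hs) (comul : H ⟶ H ⊗ H) : Hs ⊗ Hs ⟶ Hs :=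
  (ρ_ (Hs ⊗ Hs)).inv ≫ ((Hs ⊗ Hs) ◁ dd.b) ≫ (α_ (Hs ⊗ Hs) H Hs).inv ≫
    ((((Hs ⊗ Hs) ◁ comul) ≫ pairHH dd.d) ▷ Hs) ≫ (λ_ Hs).hom

/-- The unit of the dual algebra `H*`: the transpose of the counit. -/
def oneDual (dd : DualData H Hs) (counit : H ⟶ 𝟙_ C) : 𝟙_ C ⟶ Hs :=
  dd.b ≫ (counit ▷ Hs) ≫ (λ_ Hs).hom

/-- The counit of the dual coalgebra `H*`: the transpose of the unit. -/
def counitDual (dd : DualData H Hs) (one : 𝟙_ C ⟶ H) : Hs ⟶ 𝟙_ C :=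
  (ρ_ Hs).inv ≫ (Hs ◁ one) ≫ dd.d

/-- The comultiplication of the dual coalgebra `H*`: the transpose of the multiplication. -/
def comulDual (dd : DualData H Hs) (mul : H ⊗ H ⟶ H) : Hs ⟶ Hs ⊗ Hs :=
  (ρ_ Hs).inv ≫ (Hs ◁ coevHH dd.b) ≫ (α_ Hs (H ⊗ H) (Hs ⊗ Hs)).inv ≫
    (((Hs ◁ mul) ≫ dd.d) ▷ (Hs ⊗ Hs)) ≫ (λ_ (Hs ⊗ Hs)).hom

/-- The multiplication of `H^ = ((H*)^op)^cop` : the opposite of the dual multiplication. -/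
def mulHat (dd : DualData H Hs) (comul : H ⟶ H ⊗ H) : Hs ⊗ Hs ⟶ Hs :=
  (β_ Hs Hs).hom ≫ mulDual dd comul

/-- The comultiplication of `H^ = ((H*)^op)^cop` : the opposite of the dual comultiplication. -/
def comulHat (dd : DualData H Hs) (mul : H ⊗ H ⟶ H) : Hs ⟶ Hs ⊗ Hs :=
  comulDual dd mul ≫ (β_ Hs Hs).hom

/-- The left action `⇀ = (id ⊗ d)(c_{H^,H} ⊗ id)(id ⊗ Δ) : H^ ⊗ H ⟶ H`. -/
def actHat (dd : DualData H Hs) (comul : H ⟶ H ⊗ H) : Hs ⊗ H ⟶ H :=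
  (Hs ◁ comul) ≫ (α_ Hs H H).inv ≫ ((β_ Hs H).hom ▷ H) ≫ (α_ H Hs H).hom ≫
    (H ◁ dd.d) ≫ (ρ_ H).hom

/-- The left action `⇀ = (id ⊗ d)(id ⊗ c_{H,H^})(c_{H,H^} ⊗ id)(id ⊗ Δ_{H^}) : H ⊗ H^ ⟶ H^`. -/
def actOnHat (dd : DualData H Hs) (mul : H ⊗ H ⟶ H) : H ⊗ Hs ⟶ Hs :=
  (H ◁ comulHat dd mul) ≫ (α_ H Hs Hs).inv ≫ ((β_ H Hs).hom ▷ Hs) ≫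
    (α_ Hs H Hs).hom ≫ (Hs ◁ (β_ H Hs).hom) ≫ (Hs ◁ dd.d) ≫ (ρ_ Hs).hom

/-- The multiplication `id_H ⊗ d ⊗ id_{H^}` of the algebra `H ⊗̄ H^`. -/
def mbar (dd : DualData H Hs) : (H ⊗ Hs) ⊗ (H ⊗ Hs) ⟶ H ⊗ Hs :=
  (α_ H Hs (H ⊗ Hs)).hom ≫
    (H ◁ ((α_ Hs H Hs).inv ≫ (dd.d ▷ Hs) ≫ (λ_ Hs).hom))

/-- The smash product multiplication on `R ⊗ B` for a bialgebra `B` acting on the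
algebra `R` via `act : B ⊗ R ⟶ R`. -/
def smashMul {R B : C} (mR : R ⊗ R ⟶ R) (mB : B ⊗ B ⟶ B) (comulB : B ⟶ B ⊗ B)
    (act : B ⊗ R ⟶ R) : (R ⊗ B) ⊗ (R ⊗ B) ⟶ R ⊗ B :=
  ((R ◁ comulB) ▷ (R ⊗ B)) ≫ (α_ R (B ⊗ B) (R ⊗ B)).hom ≫
    (R ◁ ((α_ B B (R ⊗ B)).hom ≫
      (B ◁ ((α_ B R B).inv ≫ ((β_ B R).hom ▷ B) ≫ (α_ R B B).hom ≫ (R ◁ mB))) ≫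
      (α_ B R B).inv ≫ (act ▷ B))) ≫
    (α_ R R B).inv ≫ (mR ▷ B)

/-- The unit of a (smash/tensor) product algebra on `R ⊗ B`. -/
def smashOne {R B : C} (oneR : 𝟙_ C ⟶ R) (oneB : 𝟙_ C ⟶ B) : 𝟙_ C ⟶ R ⊗ B :=
  (λ_ (𝟙_ C)).inv ≫ (oneR ⊗ₘ oneB)

/-- The morphism `λ = (m ⊗ d ⊗ id)(id ⊗ c_{H^,H} ⊗ id ⊗ id)(id ⊗ id ⊗ Δ ⊗ id)(id ⊗ id ⊗ b)`. -/
def lamMor (dd : DualData H Hs) (mul : H ⊗ H ⟶ H) (comul : H ⟶ H ⊗ H) :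
    H ⊗ Hs ⟶ H ⊗ Hs :=
  (ρ_ (H ⊗ Hs)).inv ≫ ((H ⊗ Hs) ◁ (dd.b ≫ (comul ▷ Hs))) ≫
    (α_ H Hs ((H ⊗ H) ⊗ Hs)).hom ≫
    (H ◁ ((Hs ◁ (α_ H H Hs).hom) ≫ (α_ Hs H (H ⊗ Hs)).inv ≫
      ((β_ Hs H).hom ▷ (H ⊗ Hs)) ≫ (α_ H Hs (H ⊗ Hs)).hom ≫
      (H ◁ ((α_ Hs H Hs).inv ≫ (dd.d ▷ Hs) ≫ (λ_ Hs).hom)))) ≫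
    (α_ H H Hs).inv ≫ (mul ▷ Hs)

/-- The induced `H^`-action on a smash product `R # H`:
`⇀' = (id_R ⊗ ⇀)(c_{H^,R} ⊗ id_H)`. -/
def actSmash (dd : DualData H Hs) (comul : H ⟶ H ⊗ H) (R : C) :
    Hs ⊗ (R ⊗ H) ⟶ R ⊗ H :=
  (α_ Hs R H).inv ≫ ((β_ Hs R).hom ▷ H) ≫ (α_ R Hs H).hom ≫ (R ◁ actHat dd comul)

/-- The action `α = (τ ⊗ id ⊗ τ̄)(id ⊗ id ⊗ c_{H,A} ⊗ id)(id ⊗ c_{H,A} ⊗ Δ)(Δ ⊗ Δ)`. -/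
def dcAlpha {Hb Ab : C} (comulH : Hb ⟶ Hb ⊗ Hb) (comulA : Ab ⟶ Ab ⊗ Ab)
    (τ τbar : Hb ⊗ Ab ⟶ 𝟙_ C) : Hb ⊗ Ab ⟶ Ab :=
  (comulH ⊗ₘ comulA) ≫ (α_ (Hb ⊗ Hb) Ab Ab).inv ≫ ((α_ Hb Hb Ab).hom ▷ Ab) ≫
    ((Hb ◁ (β_ Hb Ab).hom) ⊗ₘ comulA) ≫ (α_ Hb (Ab ⊗ Hb) (Ab ⊗ Ab)).hom ≫
    (Hb ◁ midSwap Ab Hb Ab Ab) ≫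
    (Hb ◁ (((Ab ⊗ Ab) ◁ τbar) ≫ (ρ_ (Ab ⊗ Ab)).hom)) ≫
    (α_ Hb Ab Ab).inv ≫ (τ ▷ Ab) ≫ (λ_ Ab).hom

/-- The action `β = (τ ⊗ id ⊗ τ̄)(id ⊗ c_{H,A} ⊗ id ⊗ id)(Δ ⊗ c_{H,A} ⊗ id)(Δ ⊗ Δ)`. -/
def dcBeta {Hb Ab : C} (comulH : Hb ⟶ Hb ⊗ Hb) (comulA : Ab ⟶ Ab ⊗ Ab)
    (τ τbar : Hb ⊗ Ab ⟶ 𝟙_ C) : Hb ⊗ Ab ⟶ Hb :=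
  (comulH ⊗ₘ comulA) ≫ (α_ (Hb ⊗ Hb) Ab Ab).inv ≫ ((α_ Hb Hb Ab).hom ▷ Ab) ≫
    ((comulH ⊗ₘ (β_ Hb Ab).hom) ▷ Ab) ≫ (midSwap Hb Hb Ab Hb ▷ Ab) ≫
    (((τ ▷ (Hb ⊗ Hb)) ≫ (λ_ (Hb ⊗ Hb)).hom) ▷ Ab) ≫
    (α_ Hb Hb Ab).hom ≫ (Hb ◁ τbar) ≫ (ρ_ Hb).hom

/-- The multiplication of the double cross product `A ⋈_τ H` on `A ⊗ H`. -/
def dcMul {Hb Ab : C} (mulH : Hb ⊗ Hb ⟶ Hb) (mulA : Ab ⊗ Ab ⟶ Ab)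
    (comulH : Hb ⟶ Hb ⊗ Hb) (comulA : Ab ⟶ Ab ⊗ Ab)
    (τ τbar : Hb ⊗ Ab ⟶ 𝟙_ C) : (Ab ⊗ Hb) ⊗ (Ab ⊗ Hb) ⟶ Ab ⊗ Hb :=
  ((Ab ◁ comulH) ⊗ₘ (comulA ▷ Hb)) ≫ (α_ Ab (Hb ⊗ Hb) ((Ab ⊗ Ab) ⊗ Hb)).hom ≫
    (Ab ◁ ((α_ (Hb ⊗ Hb) (Ab ⊗ Ab) Hb).inv ≫
      ((midSwap Hb Hb Ab Ab ≫
        (dcAlpha comulH comulA τ τbar ⊗ₘ dcBeta comulH comulA τ τbar)) ▷ Hb) ≫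
      (α_ Ab Hb Hb).hom ≫ (Ab ◁ mulH))) ≫
    (α_ Ab Ab Hb).inv ≫ (mulA ▷ Hb)

/-- The convolution product of two pairings `Hb ⊗ Ab ⟶ I`. -/
def convPair {Hb Ab : C} (comulH : Hb ⟶ Hb ⊗ Hb) (comulA : Ab ⟶ Ab ⊗ Ab)
    (τ σ : Hb ⊗ Ab ⟶ 𝟙_ C) : Hb ⊗ Ab ⟶ 𝟙_ C :=
  (comulH ⊗ₘ comulA) ≫ midSwap Hb Hb Ab Ab ≫ (τ ⊗ₘ σ) ≫ (λ_ (𝟙_ C)).hom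

/-- The convolution unit `ε ⊗ ε` on pairings. -/
def counitPair {Hb Ab : C} (counitH : Hb ⟶ 𝟙_ C) (counitA : Ab ⟶ 𝟙_ C) :
    Hb ⊗ Ab ⟶ 𝟙_ C :=
  (counitH ⊗ₘ counitA) ≫ (λ_ (𝟙_ C)).hom

/-- (SP1) -/
def SP1 {Hb Ab : C} (mulH : Hb ⊗ Hb ⟶ Hb) (comulA : Ab ⟶ Ab ⊗ Ab)
    (τ : Hb ⊗ Ab ⟶ 𝟙_ C) : Prop :=
  (mulH ▷ Ab) ≫ τ = (α_ Hb Hb Ab).hom ≫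
    (Hb ◁ ((Hb ◁ comulA) ≫ (α_ Hb Ab Ab).inv ≫ (τ ▷ Ab) ≫ (λ_ Ab).hom)) ≫ τ

/-- (SP2) -/
def SP2 {Hb Ab : C} (comulH : Hb ⟶ Hb ⊗ Hb) (mulA : Ab ⊗ Ab ⟶ Ab)
    (τ : Hb ⊗ Ab ⟶ 𝟙_ C) : Prop :=
  (Hb ◁ mulA) ≫ τ =
    (comulH ▷ (Ab ⊗ Ab)) ≫ midSwap Hb Hb Ab Ab ≫ (τ ⊗ₘ τ) ≫ (λ_ (𝟙_ C)).hom

/-- (SP3) -/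
def SP3 {Hb Ab : C} (counitH : Hb ⟶ 𝟙_ C) (oneA : 𝟙_ C ⟶ Ab)
    (τ : Hb ⊗ Ab ⟶ 𝟙_ C) : Prop :=
  (Hb ◁ oneA) ≫ τ = (ρ_ Hb).hom ≫ counitH

/-- (SP4) -/
def SP4 {Hb Ab : C} (oneH : 𝟙_ C ⟶ Hb) (counitA : Ab ⟶ 𝟙_ C)
    (τ : Hb ⊗ Ab ⟶ 𝟙_ C) : Prop :=
  (oneH ▷ Ab) ≫ τ = (λ_ Ab).hom ≫ counitA

/-- A pairing `τ : V ⊗ W ⟶ I` is symmetric with respect to the braiding at `U`. -/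
def SymPair {V W : C} (τ : V ⊗ W ⟶ 𝟙_ C) (U : C) : Prop :=
  ((β_ V U).hom ▷ W) ≫ (α_ U V W).hom ≫ (U ◁ τ) ≫ (ρ_ U).hom =
    (α_ V U W).hom ≫ (V ◁ (β_ U W).hom) ≫ (α_ V W U).inv ≫ (τ ▷ U) ≫ (λ_ U).hom

end PaperDefs

namespace StmtAux
open PaperDefs BraidedCategory

variable {C : Type*} [CategoryTheory.Category C] [MonoidalCategory C] [BraidedCategory C]
variable {H Hs : C}

/-- The dual data gives an exact pairing. -/
def ep (dd : DualData H Hs) : ExactPairing H Hs where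
  coevaluation' := dd.b
  evaluation' := dd.d
  coevaluation_evaluation' := by
    have h := congrArg (fun f => (ρ_ Hs).hom ≫ f ≫ (λ_ Hs).inv) dd.triangle_left
    simpa using h
  evaluation_coevaluation' := by
    have h := congrArg (fun f => (λ_ H).hom ≫ f ≫ (ρ_ H).inv) dd.triangle_right
    simpa using h

lemma cancel_left (dd : DualData H Hs) {A T : C} (f g : A ⟶ H ⊗ T)
    (h : (Hs ◁ f) ≫ (α_ Hs H T).inv ≫ (dd.d ▷ T) ≫ (λ_ T).hom
       = (Hs ◁ g) ≫ (α_ Hs H T).inv ≫ (dd.d ▷ T) ≫ (λ_ T).hom) : f = g := by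
  letI := ep dd
  apply (tensorLeftHomEquiv A H Hs T).symm.injective
  simp [tensorLeftHomEquiv, ExactPairing.evaluation, ep]
  exact h

lemma cancel_right (dd : DualData H Hs) {A T : C} (f g : A ⟶ T ⊗ Hs)
    (h : (f ▷ H) ≫ (α_ T Hs H).hom ≫ (T ◁ dd.d) ≫ (ρ_ T).hom
       = (g ▷ H) ≫ (α_ T Hs H).hom ≫ (T ◁ dd.d) ≫ (ρ_ T).hom) : f = g := by
  letI := ep dd
  apply (tensorRightHomEquiv A H Hs T).symm.injective
  simp [tensorRightHomEquiv, ExactPairing.evaluation, ep]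
  exact h

lemma key1 (dd : DualData H Hs) (X : C) :
    ((β_ Hs X).hom ▷ H) ≫ (α_ X Hs H).hom ≫ (X ◁ dd.d) ≫ (ρ_ X).hom =
      (α_ Hs X H).hom ≫ (Hs ◁ (β_ H X).inv) ≫ (α_ Hs H X).inv ≫ (dd.d ▷ X) ≫ (λ_ X).hom := by
  rw [← cancel_epi (α_ Hs X H).inv, ← cancel_epi (Hs ◁ (β_ H X).hom)]
  (slice_lhs 1 3 => rw [← hexagon_reverse])
  simp only [Category.assoc, Iso.inv_hom_id_assoc]
  (slice_lhs 2 3 => rw [← braiding_naturality_left])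
  simp only [Category.assoc, braiding_rightUnitor, MonoidalCategory.whiskerLeft_hom_inv_assoc]

lemma key2 (dd : DualData H Hs) (X : C) :
    (α_ Hs X H).hom ≫ (Hs ◁ (β_ X H).hom) ≫ (α_ Hs H X).inv ≫ (dd.d ▷ X) ≫ (λ_ X).hom =
      ((β_ X Hs).inv ▷ H) ≫ (α_ X Hs H).hom ≫ (X ◁ dd.d) ≫ (ρ_ X).hom := by
  rw [← cancel_epi ((β_ X Hs).hom ▷ H)]
  (slice_rhs 1 2 => rw [← comp_whiskerRight, Iso.hom_inv_id, id_whiskerRight])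
  (slice_lhs 1 3 => rw [← hexagon_forward])
  simp only [Category.assoc, Iso.hom_inv_id_assoc]
  (slice_lhs 2 3 => rw [← braiding_naturality_right])
  simp only [Category.assoc, braiding_leftUnitor, id_comp]

lemma symPair_iff_fst (dd : DualData H Hs) (X : C) :
    SymPair dd.d X ↔ (β_ X H).hom = (β_ H X).inv := by
  unfold SymPair
  rw [key1 dd X]
  constructor
  · intro h
    exact (cancel_left dd _ _ ((cancel_epi (α_ Hs X H).hom).1 h)).symm
  · intro h; rw [h]

lemma symPair_iff_snd (dd : DualData H Hs) (X : C) :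
    SymPair dd.d X ↔ (β_ Hs X).hom = (β_ X Hs).inv := by
  unfold SymPair
  rw [key2 dd X]
  constructor
  · intro h; exact cancel_right dd _ _ h
  · intro h; rw [h]

lemma flip_iff (U V : C) : (β_ U V).hom = (β_ V U).inv ↔ (β_ V U).hom = (β_ U V).inv := by
  constructor <;> intro h <;>
  · calc (β_ _ _).hom = (β_ _ _).hom ≫ (β_ _ _).hom ≫ (β_ _ _).inv := by simp
      _ = (β_ _ _).hom ≫ (β_ _ _).inv ≫ (β_ _ _).inv := by rw [← h]
      _ = (β_ _ _).inv := by simp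

end StmtAux


open PaperDefs in
/-- Lemma 1.1 (i) ⟺ (ii) ⟺ (iii): for a finite object `H` with left dual `H*`,
symmetry of the evaluation w.r.t. the braiding, the condition `c_{U,V} = c_{V,U}⁻¹`
for `U, V ∈ {H, H*}`, and the condition `c_{H,H} = c_{H,H}⁻¹` are all equivalent. -/
theorem stmt_0 {C : Type*} [CategoryTheory.Category C]
    [CategoryTheory.MonoidalCategory C] [CategoryTheory.BraidedCategory C]
    (H Hs : C) (dd : DualData H Hs) :
    ((SymPair dd.d H ∧ SymPair dd.d Hs) ↔ ((β_ H H).hom = (β_ H H).inv)) ∧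
    ((((β_ H H).hom = (β_ H H).inv) ∧ ((β_ Hs Hs).hom = (β_ Hs Hs).inv) ∧
        ((β_ H Hs).hom = (β_ Hs H).inv) ∧ ((β_ Hs H).hom = (β_ H Hs).inv)) ↔
      ((β_ H H).hom = (β_ H H).inv)) := by
  have e1 := StmtAux.symPair_iff_fst dd H
  have e2 := StmtAux.symPair_iff_snd dd H
  have e3 := StmtAux.symPair_iff_fst dd Hs
  have e4 := StmtAux.symPair_iff_snd dd Hs
  constructor
  · constructor
    · rintro ⟨h1, _⟩; exact e1.1 h1
    · intro hA; exact ⟨e1.2 hA, e3.2 (e2.1 (e1.2 hA))⟩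
  · constructor
    · rintro ⟨h, _⟩; exact h
    · intro hA
      have hD := e2.1 (e1.2 hA)
      exact ⟨hA, e4.1 (e3.2 hD), (StmtAux.flip_iff _ _).1 hD, hD⟩
end

section
/- Let H be a finite Hopf algebra in a braided monoidal category C with braiding c satisfying c_{H,H} = c_{H,H}^{-1}. Then H is a left module algebra over H^ := ((H*)^op)^cop under the action ⇀ = (id ⊗ d)(c_{H^,H} ⊗ id)(id ⊗ Δ) : H^ ⊗ H → H, i.e. this action makes H an algebra in the category of left H^-modules. -/
open CategoryTheory Category MonoidalCategory

open CategoryTheory Category MonoidalCategory BraidedCategory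

set_option linter.unusedSectionVars false
set_option maxHeartbeats 4000000

namespace PaperAux
open PaperDefs

variable {C : Type*} [Category C] [MonoidalCategory C] [BraidedCategory C]
variable {H Hs : C}



theorem zig_r (dd : DualData H Hs) :
    dd.b ▷ H ≫ (α_ H Hs H).hom ≫ H ◁ dd.d = (λ_ H).hom ≫ (ρ_ H).inv := by
  rw [← cancel_epi (λ_ H).inv, ← cancel_mono (ρ_ H).hom]
  simpa [Category.assoc] using dd.triangle_right

theorem zig_l (dd : DualData H Hs) :
    Hs ◁ dd.b ≫ (α_ Hs H Hs).inv ≫ dd.d ▷ Hs = (ρ_ Hs).hom ≫ (λ_ Hs).inv := by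
  rw [← cancel_epi (ρ_ Hs).inv, ← cancel_mono (λ_ Hs).hom]
  simpa [Category.assoc] using dd.triangle_left

theorem ev_sharp {A As X : C} {dA : As ⊗ A ⟶ 𝟙_ C} {bA : 𝟙_ C ⟶ A ⊗ As}
    (tri : bA ▷ A ≫ (α_ A As A).hom ≫ A ◁ dA = (λ_ A).hom ≫ (ρ_ A).inv)
    (t : X ⊗ A ⟶ 𝟙_ C) :
    (((ρ_ X).inv ≫ (X ◁ bA) ≫ (α_ X A As).inv ≫ (t ▷ As) ≫ (λ_ As).hom) ▷ A) ≫ dA = t := by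
  calc _ = 𝟙 _ ⊗≫ X ◁ (bA ▷ A) ⊗≫ (t ▷ (As ⊗ A) ≫ 𝟙_ C ◁ dA) ⊗≫ 𝟙 _ := by
        monoidal
    _ = 𝟙 _ ⊗≫ X ◁ (bA ▷ A ≫ (α_ A As A).hom ≫ A ◁ dA) ⊗≫ t ▷ 𝟙_ C ⊗≫ 𝟙 _ := by
        rw [← whisker_exchange]; monoidal
    _ = t := by
        rw [tri]; monoidal

theorem triHH (dd : DualData H Hs) :
    coevHH dd.b ▷ (H ⊗ H) ≫ (α_ (H ⊗ H) (Hs ⊗ Hs) (H ⊗ H)).hom ≫ (H ⊗ H) ◁ pairHH dd.d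
      = (λ_ (H ⊗ H)).hom ≫ (ρ_ (H ⊗ H)).inv := by
  calc _ = 𝟙 _ ⊗≫ dd.b ▷ (H ⊗ H) ⊗≫
        H ◁ (dd.b ▷ (Hs ⊗ (H ⊗ H)) ≫
          (H ⊗ Hs) ◁ ((α_ Hs H H).inv ≫ dd.d ▷ H ≫ (λ_ H).hom)) ⊗≫
        H ◁ (H ◁ dd.d) ⊗≫ 𝟙 _ := by
        dsimp only [coevHH, pairHH]; monoidal
    _ = 𝟙 _ ⊗≫ dd.b ▷ (H ⊗ H) ⊗≫
        H ◁ (𝟙_ C ◁ ((α_ Hs H H).inv ≫ dd.d ▷ H ≫ (λ_ H).hom) ≫ dd.b ▷ H) ⊗≫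
        H ◁ (H ◁ dd.d) ⊗≫ 𝟙 _ := by
        rw [← whisker_exchange]
    _ = 𝟙 _ ⊗≫ (dd.b ▷ H ≫ (α_ H Hs H).hom ≫ H ◁ dd.d) ▷ H ⊗≫
        H ◁ (dd.b ▷ H ≫ (α_ H Hs H).hom ≫ H ◁ dd.d) ⊗≫ 𝟙 _ := by
        monoidal
    _ = _ := by
        rw [zig_r dd]; monoidal

theorem T1 (dd : DualData H Hs) (comul : H ⟶ H ⊗ H) :
    (mulDual dd comul ▷ H) ≫ dd.d = ((Hs ⊗ Hs) ◁ comul) ≫ pairHH dd.d := by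
  unfold mulDual
  exact ev_sharp (zig_r dd) _

theorem T2 (dd : DualData H Hs) (mul : H ⊗ H ⟶ H) :
    (comulDual dd mul ▷ (H ⊗ H)) ≫ pairHH dd.d = (Hs ◁ mul) ≫ dd.d := by
  unfold comulDual
  exact ev_sharp (triHH dd) _

theorem Tone (dd : DualData H Hs) (f : H ⟶ 𝟙_ C) :
    ((dd.b ≫ (f ▷ Hs) ≫ (λ_ Hs).hom) ▷ H) ≫ dd.d = (λ_ H).hom ≫ f := by
  calc _ = 𝟙 _ ⊗≫ (dd.b ▷ H) ⊗≫ (f ▷ (Hs ⊗ H) ≫ 𝟙_ C ◁ dd.d) ⊗≫ 𝟙 _ := by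
        monoidal
    _ = 𝟙 _ ⊗≫ (dd.b ▷ H ≫ (α_ H Hs H).hom ≫ H ◁ dd.d) ⊗≫ f ▷ 𝟙_ C ⊗≫ 𝟙 _ := by
        rw [← whisker_exchange]; monoidal
    _ = _ := by
        rw [zig_r dd]; monoidal

/-- transpose of `u : Hs ⊗ X ⟶ X' ⊗ Hs` along the duality. -/
noncomputable def Phi (dd : DualData H Hs) {X X' : C} (u : Hs ⊗ X ⟶ X' ⊗ Hs) :
    X ⊗ H ⟶ H ⊗ X' :=
  𝟙 (X ⊗ H) ⊗≫ dd.b ▷ (X ⊗ H) ⊗≫ H ◁ (u ▷ H) ⊗≫ ((H ⊗ X' : C)) ◁ dd.d ⊗≫ 𝟙 (H ⊗ X')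

noncomputable def Psi (dd : DualData H Hs) {X X' : C} (w : X ⊗ H ⟶ H ⊗ X') :
    Hs ⊗ X ⟶ X' ⊗ Hs :=
  𝟙 (Hs ⊗ X) ⊗≫ (Hs ⊗ X) ◁ dd.b ⊗≫ Hs ◁ (w ▷ Hs) ⊗≫ dd.d ▷ (X' ⊗ Hs) ⊗≫ 𝟙 (X' ⊗ Hs)

theorem Psi_Phi (dd : DualData H Hs) {X X' : C} (u : Hs ⊗ X ⟶ X' ⊗ Hs) :
    Psi dd (Phi dd u) = u := by
  dsimp only [Psi, Phi]
  calc _ = 𝟙 _ ⊗≫ (((Hs ⊗ (𝟙_ C ⊗ X) : C)) ◁ dd.b ≫ (Hs ◁ (dd.b ▷ X)) ▷ (H ⊗ Hs)) ⊗≫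
        Hs ◁ ((H ◁ (u ▷ H)) ▷ Hs) ⊗≫ Hs ◁ (((H ⊗ X' : C)) ◁ (dd.d ▷ Hs)) ⊗≫
        dd.d ▷ (X' ⊗ Hs) ⊗≫ 𝟙 _ := by
        monoidal
    _ = 𝟙 _ ⊗≫ ((Hs ◁ (dd.b ▷ X)) ▷ 𝟙_ C ≫ ((Hs ⊗ ((H ⊗ Hs) ⊗ X) : C)) ◁ dd.b) ⊗≫
        Hs ◁ ((H ◁ (u ▷ H)) ▷ Hs) ⊗≫ Hs ◁ (((H ⊗ X' : C)) ◁ (dd.d ▷ Hs)) ⊗≫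
        dd.d ▷ (X' ⊗ Hs) ⊗≫ 𝟙 _ := by
        rw [whisker_exchange]
    _ = 𝟙 _ ⊗≫ Hs ◁ (dd.b ▷ X) ⊗≫
        (((Hs ⊗ (H ⊗ (Hs ⊗ X)) : C)) ◁ dd.b ≫ (Hs ◁ (H ◁ u)) ▷ (H ⊗ Hs)) ⊗≫
        Hs ◁ (((H ⊗ X' : C)) ◁ (dd.d ▷ Hs)) ⊗≫ dd.d ▷ (X' ⊗ Hs) ⊗≫ 𝟙 _ := by
        monoidal
    _ = 𝟙 _ ⊗≫ Hs ◁ (dd.b ▷ X) ⊗≫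
        ((Hs ◁ (H ◁ u)) ▷ 𝟙_ C ≫ ((Hs ⊗ (H ⊗ (X' ⊗ Hs)) : C)) ◁ dd.b) ⊗≫
        Hs ◁ (((H ⊗ X' : C)) ◁ (dd.d ▷ Hs)) ⊗≫ dd.d ▷ (X' ⊗ Hs) ⊗≫ 𝟙 _ := by
        rw [whisker_exchange]
    _ = 𝟙 _ ⊗≫ Hs ◁ (dd.b ▷ X) ⊗≫ Hs ◁ (H ◁ u) ⊗≫
        ((Hs ⊗ (H ⊗ X') : C)) ◁ (Hs ◁ dd.b ≫ (α_ Hs H Hs).inv ≫ dd.d ▷ Hs) ⊗≫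
        dd.d ▷ (X' ⊗ Hs) ⊗≫ 𝟙 _ := by
        monoidal
    _ = 𝟙 _ ⊗≫ Hs ◁ (dd.b ▷ X) ⊗≫ Hs ◁ (H ◁ u) ⊗≫
        ((Hs ⊗ (H ⊗ X') : C)) ◁ ((ρ_ Hs).hom ≫ (λ_ Hs).inv) ⊗≫
        dd.d ▷ (X' ⊗ Hs) ⊗≫ 𝟙 _ := by
        rw [zig_l]
    _ = 𝟙 _ ⊗≫ Hs ◁ (dd.b ▷ X) ⊗≫
        (((Hs ⊗ H : C)) ◁ u ≫ dd.d ▷ (X' ⊗ Hs)) ⊗≫ 𝟙 _ := by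
        monoidal
    _ = 𝟙 _ ⊗≫ Hs ◁ (dd.b ▷ X) ⊗≫
        (dd.d ▷ (Hs ⊗ X) ≫ 𝟙_ C ◁ u) ⊗≫ 𝟙 _ := by
        rw [whisker_exchange]
    _ = 𝟙 _ ⊗≫ (Hs ◁ dd.b ≫ (α_ Hs H Hs).inv ≫ dd.d ▷ Hs) ▷ X ⊗≫ 𝟙_ C ◁ u ⊗≫ 𝟙 _ := by
        monoidal
    _ = 𝟙 _ ⊗≫ ((ρ_ Hs).hom ≫ (λ_ Hs).inv) ▷ X ⊗≫ 𝟙_ C ◁ u ⊗≫ 𝟙 _ := by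
        rw [zig_l]
    _ = u := by
        monoidal

theorem key_hom (dd : DualData H Hs) (X : C) :
    dd.b ▷ X ≫ (α_ H Hs X).hom ≫ H ◁ (β_ Hs X).hom
      = (β_ (𝟙_ C) X).hom ≫ X ◁ dd.b ≫ (α_ X H Hs).inv ≫ (β_ H X).inv ▷ Hs ≫
        (α_ H X Hs).hom := by
  have h := braiding_naturality_left dd.b X
  rw [braiding_tensor_left_hom] at h
  rw [← cancel_mono (((α_ H X Hs).symm ≪≫ whiskerRightIso (β_ H X) Hs ≪≫ (α_ X H Hs)).hom)]
  simp only [Iso.trans_hom, Iso.symm_hom, whiskerRightIso_hom]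
  simp only [Category.assoc, Iso.hom_inv_id_assoc, Iso.inv_hom_id_assoc,
    ← comp_whiskerRight_assoc, Iso.inv_hom_id, id_whiskerRight, Category.id_comp]
  simpa [Category.assoc] using h

theorem key_inv (dd : DualData H Hs) (X : C) :
    dd.b ▷ X ≫ (α_ H Hs X).hom ≫ H ◁ (β_ X Hs).inv
      = (β_ X (𝟙_ C)).inv ≫ X ◁ dd.b ≫ (α_ X H Hs).inv ≫ (β_ X H).hom ▷ Hs ≫
        (α_ H X Hs).hom := by
  have h := braiding_inv_naturality_left dd.b X
  rw [braiding_tensor_right_inv] at h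
  rw [← cancel_mono (((α_ H X Hs).symm ≪≫ whiskerRightIso (β_ X H).symm Hs ≪≫ (α_ X H Hs)).hom)]
  simp only [Iso.trans_hom, Iso.symm_hom, whiskerRightIso_hom]
  simp only [Category.assoc, Iso.hom_inv_id_assoc, Iso.inv_hom_id_assoc,
    ← comp_whiskerRight_assoc, Iso.hom_inv_id, id_whiskerRight, Category.id_comp]
  simpa [Category.assoc] using h

theorem Phi_braid_hom (dd : DualData H Hs) (X : C) :
    Phi dd (β_ Hs X).hom
      = 𝟙 (X ⊗ H) ⊗≫ X ◁ (dd.b ▷ H) ⊗≫ (β_ H X).inv ▷ (Hs ⊗ H) ⊗≫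
        ((H ⊗ X : C)) ◁ dd.d ⊗≫ 𝟙 (H ⊗ X) := by
  dsimp only [Phi]
  calc _ = 𝟙 _ ⊗≫ ((dd.b ▷ X ≫ (α_ H Hs X).hom ≫ H ◁ (β_ Hs X).hom) ▷ H) ⊗≫
        ((H ⊗ X : C)) ◁ dd.d ⊗≫ 𝟙 _ := by
        monoidal
    _ = 𝟙 _ ⊗≫ (((β_ (𝟙_ C) X).hom ≫ X ◁ dd.b ≫ (α_ X H Hs).inv ≫
        (β_ H X).inv ▷ Hs ≫ (α_ H X Hs).hom) ▷ H) ⊗≫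
        ((H ⊗ X : C)) ◁ dd.d ⊗≫ 𝟙 _ := by
        rw [key_hom]
    _ = _ := by
        rw [braiding_tensorUnit_left]; monoidal

theorem Phi_braid_inv (dd : DualData H Hs) (X : C) :
    Phi dd (β_ X Hs).inv
      = 𝟙 (X ⊗ H) ⊗≫ X ◁ (dd.b ▷ H) ⊗≫ (β_ X H).hom ▷ (Hs ⊗ H) ⊗≫
        ((H ⊗ X : C)) ◁ dd.d ⊗≫ 𝟙 (H ⊗ X) := by
  dsimp only [Phi]
  calc _ = 𝟙 _ ⊗≫ ((dd.b ▷ X ≫ (α_ H Hs X).hom ≫ H ◁ (β_ X Hs).inv) ▷ H) ⊗≫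
        ((H ⊗ X : C)) ◁ dd.d ⊗≫ 𝟙 _ := by
        monoidal
    _ = 𝟙 _ ⊗≫ (((β_ X (𝟙_ C)).inv ≫ X ◁ dd.b ≫ (α_ X H Hs).inv ≫
        (β_ X H).hom ▷ Hs ≫ (α_ H X Hs).hom) ▷ H) ⊗≫
        ((H ⊗ X : C)) ◁ dd.d ⊗≫ 𝟙 _ := by
        rw [key_inv]
    _ = _ := by
        rw [braiding_inv_tensorUnit_right]; monoidal


theorem symlift (dd : DualData H Hs) {X : C} (hX : (β_ X H).hom = (β_ H X).inv) :
    (β_ Hs X).hom = (β_ X Hs).inv := by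
  have e1 := Phi_braid_hom dd X
  have e2 := Phi_braid_inv dd X
  rw [hX] at e2
  rw [← Psi_Phi dd (β_ Hs X).hom, ← Psi_Phi dd (β_ X Hs).inv, e1, e2]

theorem sym1 (dd : DualData H Hs) (hc : (β_ H H).hom = (β_ H H).inv) :
    (β_ Hs H).hom = (β_ H Hs).inv :=
  symlift dd hc

theorem sym2 (dd : DualData H Hs) (hc : (β_ H H).hom = (β_ H H).inv) :
    (β_ Hs Hs).hom = (β_ Hs Hs).inv :=
  symlift dd (sym1 dd hc)
theorem crux (dd : DualData H Hs) (h2 : (β_ Hs Hs).hom = (β_ Hs Hs).inv) :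
    (β_ Hs Hs).hom ▷ H ≫ (α_ Hs Hs H).hom ≫ Hs ◁ dd.d ≫ (ρ_ Hs).hom
      = (α_ Hs Hs H).hom ≫ Hs ◁ (β_ Hs H).hom ≫ (α_ Hs H Hs).inv ≫ dd.d ▷ Hs ≫
        (λ_ Hs).hom := by
  have key : Hs ◁ dd.d ≫ (ρ_ Hs).hom
      = (β_ Hs (Hs ⊗ H)).hom ≫ dd.d ▷ Hs ≫ (λ_ Hs).hom := by
    rw [← braiding_leftUnitor Hs, ← Category.assoc, braiding_naturality_right,
      Category.assoc]
  have hhom : (β_ Hs Hs).hom ≫ (β_ Hs Hs).hom = 𝟙 _ := by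
    nth_rewrite 2 [h2]; exact Iso.hom_inv_id _
  rw [key, braiding_tensor_right_hom]
  simp only [Category.assoc, Iso.hom_inv_id_assoc]
  rw [← comp_whiskerRight_assoc, hhom, id_whiskerRight, Category.id_comp]



theorem Tone' (dd : DualData H Hs) (f : H ⟶ 𝟙_ C) :
    (oneDual dd f ▷ H) ≫ dd.d = (λ_ H).hom ≫ f := by
  dsimp only [oneDual]; exact Tone dd f

theorem part2 (dd : DualData H Hs) (hH : HopfData H) :
    (oneDual dd hH.counit ▷ H) ≫ actHat dd hH.comul = (λ_ H).hom := by
  calc _ = 𝟙 _ ⊗≫ (oneDual dd hH.counit ▷ H ≫ Hs ◁ hH.comul) ⊗≫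
        (β_ Hs H).hom ▷ H ⊗≫ H ◁ dd.d ⊗≫ 𝟙 _ := by
        dsimp only [actHat]; monoidal
    _ = 𝟙 _ ⊗≫ (𝟙_ C ◁ hH.comul ≫ oneDual dd hH.counit ▷ (H ⊗ H)) ⊗≫
        (β_ Hs H).hom ▷ H ⊗≫ H ◁ dd.d ⊗≫ 𝟙 _ := by
        rw [← whisker_exchange]
    _ = 𝟙 _ ⊗≫ 𝟙_ C ◁ hH.comul ⊗≫ ((oneDual dd hH.counit ▷ H ≫ (β_ Hs H).hom) ▷ H) ⊗≫
        H ◁ dd.d ⊗≫ 𝟙 _ := by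
        monoidal
    _ = 𝟙 _ ⊗≫ 𝟙_ C ◁ hH.comul ⊗≫ (((β_ (𝟙_ C) H).hom ≫ H ◁ oneDual dd hH.counit) ▷ H) ⊗≫
        H ◁ dd.d ⊗≫ 𝟙 _ := by
        rw [braiding_naturality_left]
    _ = 𝟙 _ ⊗≫ 𝟙_ C ◁ hH.comul ⊗≫ H ◁ (oneDual dd hH.counit ▷ H ≫ dd.d) ⊗≫ 𝟙 _ := by
        rw [braiding_tensorUnit_left]; monoidal
    _ = 𝟙 _ ⊗≫ 𝟙_ C ◁ (hH.comul ≫ (H ◁ hH.counit) ≫ (ρ_ H).hom) ⊗≫ 𝟙 _ := by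
        rw [Tone']; monoidal
    _ = (λ_ H).hom := by
        rw [hH.comul_counit]; monoidal

theorem part4 (dd : DualData H Hs) (hH : HopfData H) :
    (Hs ◁ hH.one) ≫ actHat dd hH.comul
      = (ρ_ Hs).hom ≫ counitDual dd hH.one ≫ hH.one := by
  calc _ = 𝟙 _ ⊗≫ Hs ◁ (hH.one ≫ hH.comul) ⊗≫ (β_ Hs H).hom ▷ H ⊗≫ H ◁ dd.d ⊗≫ 𝟙 _ := by
        dsimp only [actHat]; monoidal
    _ = 𝟙 _ ⊗≫ Hs ◁ ((λ_ (𝟙_ C)).inv ≫ (hH.one ▷ 𝟙_ C ≫ H ◁ hH.one)) ⊗≫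
        (β_ Hs H).hom ▷ H ⊗≫ H ◁ dd.d ⊗≫ 𝟙 _ := by
        rw [hH.one_comul, MonoidalCategory.tensorHom_def]
    _ = 𝟙 _ ⊗≫ Hs ◁ (hH.one ▷ 𝟙_ C) ⊗≫ ((Hs ⊗ H : C) ◁ hH.one ≫ (β_ Hs H).hom ▷ H) ⊗≫
        H ◁ dd.d ⊗≫ 𝟙 _ := by
        monoidal
    _ = 𝟙 _ ⊗≫ Hs ◁ (hH.one ▷ 𝟙_ C) ⊗≫ ((β_ Hs H).hom ▷ 𝟙_ C ≫ (H ⊗ Hs : C) ◁ hH.one) ⊗≫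
        H ◁ dd.d ⊗≫ 𝟙 _ := by
        rw [whisker_exchange]
    _ = 𝟙 _ ⊗≫ (Hs ◁ hH.one ≫ (β_ Hs H).hom) ⊗≫ (H ⊗ Hs : C) ◁ hH.one ⊗≫
        H ◁ dd.d ⊗≫ 𝟙 _ := by
        monoidal
    _ = 𝟙 _ ⊗≫ ((β_ Hs (𝟙_ C)).hom ≫ hH.one ▷ Hs) ⊗≫ (H ⊗ Hs : C) ◁ hH.one ⊗≫
        H ◁ dd.d ⊗≫ 𝟙 _ := by
        rw [braiding_naturality_right]
    _ = 𝟙 _ ⊗≫ (hH.one ▷ Hs ≫ H ◁ ((ρ_ Hs).inv ≫ Hs ◁ hH.one ≫ dd.d)) ⊗≫ 𝟙 _ := by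
        rw [braiding_tensorUnit_right]; monoidal
    _ = 𝟙 _ ⊗≫ (𝟙_ C ◁ ((ρ_ Hs).inv ≫ Hs ◁ hH.one ≫ dd.d) ≫ hH.one ▷ 𝟙_ C) ⊗≫ 𝟙 _ := by
        rw [← whisker_exchange]
    _ = (ρ_ Hs).hom ≫ counitDual dd hH.one ≫ hH.one := by
        dsimp only [counitDual]; monoidal


theorem T1hat (dd : DualData H Hs) (comul : H ⟶ H ⊗ H) :
    (mulHat dd comul ▷ H) ≫ dd.d
      = (β_ Hs Hs).hom ▷ H ≫ ((Hs ⊗ Hs : C) ◁ comul) ≫ pairHH dd.d := by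
  dsimp only [mulHat]
  rw [comp_whiskerRight, Category.assoc, T1]

/-- common middle form for part 1 -/
noncomputable def MID1 (dd : DualData H Hs) (comul : H ⟶ H ⊗ H) : (Hs ⊗ Hs) ⊗ H ⟶ H :=
  𝟙 ((Hs ⊗ Hs) ⊗ H) ⊗≫
    (Hs ⊗ Hs : C) ◁ comul ⊗≫
    (Hs ⊗ Hs : C) ◁ (H ◁ comul) ⊗≫
    Hs ◁ ((β_ Hs H).hom ▷ (H ⊗ H)) ⊗≫
    (β_ Hs H).hom ▷ (Hs ⊗ (H ⊗ H)) ⊗≫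
    H ◁ (Hs ◁ ((β_ Hs H).hom ▷ H)) ⊗≫
    H ◁ (dd.d ▷ (Hs ⊗ H)) ⊗≫
    H ◁ dd.d ⊗≫ 𝟙 H

theorem part1_lhs (dd : DualData H Hs) (hH : HopfData H)
    (hc : (β_ H H).hom = (β_ H H).inv) :
    (mulHat dd hH.comul ▷ H) ≫ actHat dd hH.comul = MID1 dd hH.comul := by
  calc _ = 𝟙 _ ⊗≫ (mulHat dd hH.comul ▷ H ≫ Hs ◁ hH.comul) ⊗≫
        (β_ Hs H).hom ▷ H ⊗≫ H ◁ dd.d ⊗≫ 𝟙 _ := by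
        dsimp only [actHat]; monoidal
    _ = 𝟙 _ ⊗≫ ((Hs ⊗ Hs : C) ◁ hH.comul ≫ mulHat dd hH.comul ▷ (H ⊗ H)) ⊗≫
        (β_ Hs H).hom ▷ H ⊗≫ H ◁ dd.d ⊗≫ 𝟙 _ := by
        rw [← whisker_exchange]
    _ = 𝟙 _ ⊗≫ (Hs ⊗ Hs : C) ◁ hH.comul ⊗≫
        ((mulHat dd hH.comul ▷ H ≫ (β_ Hs H).hom) ▷ H) ⊗≫ H ◁ dd.d ⊗≫ 𝟙 _ := by
        monoidal
    _ = 𝟙 _ ⊗≫ (Hs ⊗ Hs : C) ◁ hH.comul ⊗≫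
        (((β_ (Hs ⊗ Hs) H).hom ≫ H ◁ mulHat dd hH.comul) ▷ H) ⊗≫ H ◁ dd.d ⊗≫ 𝟙 _ := by
        rw [braiding_naturality_left]
    _ = 𝟙 _ ⊗≫ (Hs ⊗ Hs : C) ◁ hH.comul ⊗≫
        Hs ◁ ((β_ Hs H).hom ▷ H) ⊗≫ (β_ Hs H).hom ▷ (Hs ⊗ H) ⊗≫
        H ◁ (mulHat dd hH.comul ▷ H ≫ dd.d) ⊗≫ 𝟙 _ := by
        rw [braiding_tensor_left_hom]; monoidal
    _ = 𝟙 _ ⊗≫ (Hs ⊗ Hs : C) ◁ hH.comul ⊗≫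
        Hs ◁ ((β_ Hs H).hom ▷ H) ⊗≫ (β_ Hs H).hom ▷ (Hs ⊗ H) ⊗≫
        H ◁ ((β_ Hs Hs).hom ▷ H ≫ ((Hs ⊗ Hs : C) ◁ hH.comul) ≫ pairHH dd.d) ⊗≫ 𝟙 _ := by
        rw [T1hat]
    _ = 𝟙 _ ⊗≫ (Hs ⊗ Hs : C) ◁ hH.comul ⊗≫
        Hs ◁ ((β_ Hs H).hom ▷ H) ⊗≫ (β_ Hs H).hom ▷ (Hs ⊗ H) ⊗≫
        H ◁ ((Hs ⊗ Hs : C) ◁ hH.comul ≫ (β_ Hs Hs).hom ▷ (H ⊗ H) ≫ pairHH dd.d) ⊗≫ 𝟙 _ := by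
        rw [← whisker_exchange_assoc]
    _ = 𝟙 _ ⊗≫ (Hs ⊗ Hs : C) ◁ hH.comul ⊗≫
        Hs ◁ ((β_ Hs H).hom ▷ H) ⊗≫ (β_ Hs H).hom ▷ (Hs ⊗ H) ⊗≫
        H ◁ ((Hs ⊗ Hs : C) ◁ hH.comul) ⊗≫
        H ◁ (((β_ Hs Hs).hom ▷ H ≫ (α_ Hs Hs H).hom ≫ Hs ◁ dd.d ≫ (ρ_ Hs).hom) ▷ H) ⊗≫
        H ◁ dd.d ⊗≫ 𝟙 _ := by
        dsimp only [pairHH]; monoidal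
    _ = 𝟙 _ ⊗≫ (Hs ⊗ Hs : C) ◁ hH.comul ⊗≫
        Hs ◁ ((β_ Hs H).hom ▷ H) ⊗≫ (β_ Hs H).hom ▷ (Hs ⊗ H) ⊗≫
        H ◁ ((Hs ⊗ Hs : C) ◁ hH.comul) ⊗≫
        H ◁ (((α_ Hs Hs H).hom ≫ Hs ◁ (β_ Hs H).hom ≫ (α_ Hs H Hs).inv ≫ dd.d ▷ Hs ≫
          (λ_ Hs).hom) ▷ H) ⊗≫
        H ◁ dd.d ⊗≫ 𝟙 _ := by
        rw [crux dd (sym2 dd hc)]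
    -- now move the inner comultiplication (on h₂) before the two crossings of f,g with h₁
    _ = 𝟙 _ ⊗≫ (Hs ⊗ Hs : C) ◁ hH.comul ⊗≫
        Hs ◁ ((β_ Hs H).hom ▷ H) ⊗≫
        ((β_ Hs H).hom ▷ (Hs ⊗ H) ≫ (H ⊗ Hs : C) ◁ (Hs ◁ hH.comul)) ⊗≫
        H ◁ (Hs ◁ ((β_ Hs H).hom ▷ H)) ⊗≫
        H ◁ (dd.d ▷ (Hs ⊗ H)) ⊗≫ H ◁ dd.d ⊗≫ 𝟙 _ := by
        monoidal
    _ = 𝟙 _ ⊗≫ (Hs ⊗ Hs : C) ◁ hH.comul ⊗≫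
        Hs ◁ ((β_ Hs H).hom ▷ H) ⊗≫
        ((Hs ⊗ H : C) ◁ (Hs ◁ hH.comul) ≫ (β_ Hs H).hom ▷ (Hs ⊗ (H ⊗ H))) ⊗≫
        H ◁ (Hs ◁ ((β_ Hs H).hom ▷ H)) ⊗≫
        H ◁ (dd.d ▷ (Hs ⊗ H)) ⊗≫ H ◁ dd.d ⊗≫ 𝟙 _ := by
        rw [← whisker_exchange]
    _ = 𝟙 _ ⊗≫ (Hs ⊗ Hs : C) ◁ hH.comul ⊗≫
        Hs ◁ ((β_ Hs H).hom ▷ H ≫ (H ⊗ Hs : C) ◁ hH.comul) ⊗≫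
        (β_ Hs H).hom ▷ (Hs ⊗ (H ⊗ H)) ⊗≫
        H ◁ (Hs ◁ ((β_ Hs H).hom ▷ H)) ⊗≫
        H ◁ (dd.d ▷ (Hs ⊗ H)) ⊗≫ H ◁ dd.d ⊗≫ 𝟙 _ := by
        monoidal
    _ = 𝟙 _ ⊗≫ (Hs ⊗ Hs : C) ◁ hH.comul ⊗≫
        Hs ◁ ((Hs ⊗ H : C) ◁ hH.comul ≫ (β_ Hs H).hom ▷ (H ⊗ H)) ⊗≫
        (β_ Hs H).hom ▷ (Hs ⊗ (H ⊗ H)) ⊗≫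
        H ◁ (Hs ◁ ((β_ Hs H).hom ▷ H)) ⊗≫
        H ◁ (dd.d ▷ (Hs ⊗ H)) ⊗≫ H ◁ dd.d ⊗≫ 𝟙 _ := by
        rw [← whisker_exchange]
    _ = MID1 dd hH.comul := by
        dsimp only [MID1]; monoidal

theorem part1_rhs (dd : DualData H Hs) (hH : HopfData H) :
    (α_ Hs Hs H).hom ≫ (Hs ◁ actHat dd hH.comul) ≫ actHat dd hH.comul
      = MID1 dd hH.comul := by
  have coassoc' : hH.comul ≫ (hH.comul ▷ H)
      = (hH.comul ≫ (H ◁ hH.comul)) ≫ (α_ H H H).inv := by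
    rw [← hH.coassoc]; simp
  calc _ = 𝟙 _ ⊗≫ Hs ◁ (Hs ◁ hH.comul) ⊗≫ Hs ◁ ((β_ Hs H).hom ▷ H) ⊗≫
        Hs ◁ (H ◁ dd.d ≫ hH.comul ▷ 𝟙_ C) ⊗≫
        (β_ Hs H).hom ▷ H ⊗≫ H ◁ dd.d ⊗≫ 𝟙 _ := by
        dsimp only [actHat]; monoidal
    _ = 𝟙 _ ⊗≫ Hs ◁ (Hs ◁ hH.comul) ⊗≫ Hs ◁ ((β_ Hs H).hom ▷ H) ⊗≫
        Hs ◁ (hH.comul ▷ (Hs ⊗ H) ≫ (H ⊗ H : C) ◁ dd.d) ⊗≫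
        (β_ Hs H).hom ▷ H ⊗≫ H ◁ dd.d ⊗≫ 𝟙 _ := by
        rw [whisker_exchange]
    _ = 𝟙 _ ⊗≫ Hs ◁ (Hs ◁ hH.comul) ⊗≫
        Hs ◁ (((β_ Hs H).hom ≫ hH.comul ▷ Hs) ▷ H) ⊗≫
        Hs ◁ ((H ⊗ H : C) ◁ dd.d) ⊗≫
        (β_ Hs H).hom ▷ H ⊗≫ H ◁ dd.d ⊗≫ 𝟙 _ := by
        monoidal
    _ = 𝟙 _ ⊗≫ Hs ◁ (Hs ◁ hH.comul) ⊗≫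
        Hs ◁ ((Hs ◁ hH.comul ≫ (β_ Hs (H ⊗ H)).hom) ▷ H) ⊗≫
        Hs ◁ ((H ⊗ H : C) ◁ dd.d) ⊗≫
        (β_ Hs H).hom ▷ H ⊗≫ H ◁ dd.d ⊗≫ 𝟙 _ := by
        rw [← braiding_naturality_right]
    _ = 𝟙 _ ⊗≫ Hs ◁ (Hs ◁ (hH.comul ≫ hH.comul ▷ H)) ⊗≫
        Hs ◁ (((β_ Hs H).hom ▷ H) ▷ H) ⊗≫
        Hs ◁ ((H ◁ (β_ Hs H).hom) ▷ H) ⊗≫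
        Hs ◁ ((H ⊗ H : C) ◁ dd.d) ⊗≫
        (β_ Hs H).hom ▷ H ⊗≫ H ◁ dd.d ⊗≫ 𝟙 _ := by
        rw [braiding_tensor_right_hom]; monoidal
    _ = 𝟙 _ ⊗≫ Hs ◁ (Hs ◁ (hH.comul ≫ H ◁ hH.comul)) ⊗≫
        Hs ◁ (((β_ Hs H).hom ▷ H) ▷ H) ⊗≫
        Hs ◁ ((H ◁ (β_ Hs H).hom) ▷ H) ⊗≫
        Hs ◁ ((H ⊗ H : C) ◁ dd.d) ⊗≫
        (β_ Hs H).hom ▷ H ⊗≫ H ◁ dd.d ⊗≫ 𝟙 _ := by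
        rw [coassoc']; monoidal
    -- f1 : move the (g,h₃) cup after the (f,h₁) crossing
    _ = 𝟙 _ ⊗≫ (Hs ⊗ Hs : C) ◁ hH.comul ⊗≫ (Hs ⊗ Hs : C) ◁ (H ◁ hH.comul) ⊗≫
        Hs ◁ ((β_ Hs H).hom ▷ (H ⊗ H)) ⊗≫
        Hs ◁ (H ◁ ((β_ Hs H).hom ▷ H)) ⊗≫
        ((Hs ⊗ H : C) ◁ (H ◁ dd.d) ≫ (β_ Hs H).hom ▷ (H ⊗ 𝟙_ C)) ⊗≫
        H ◁ dd.d ⊗≫ 𝟙 _ := by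
        monoidal
    _ = 𝟙 _ ⊗≫ (Hs ⊗ Hs : C) ◁ hH.comul ⊗≫ (Hs ⊗ Hs : C) ◁ (H ◁ hH.comul) ⊗≫
        Hs ◁ ((β_ Hs H).hom ▷ (H ⊗ H)) ⊗≫
        Hs ◁ (H ◁ ((β_ Hs H).hom ▷ H)) ⊗≫
        ((β_ Hs H).hom ▷ (H ⊗ (Hs ⊗ H)) ≫ (H ⊗ Hs : C) ◁ (H ◁ dd.d)) ⊗≫
        H ◁ dd.d ⊗≫ 𝟙 _ := by
        rw [whisker_exchange]
    -- f2 : swap the two cups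
    _ = 𝟙 _ ⊗≫ (Hs ⊗ Hs : C) ◁ hH.comul ⊗≫ (Hs ⊗ Hs : C) ◁ (H ◁ hH.comul) ⊗≫
        Hs ◁ ((β_ Hs H).hom ▷ (H ⊗ H)) ⊗≫
        Hs ◁ (H ◁ ((β_ Hs H).hom ▷ H)) ⊗≫
        (β_ Hs H).hom ▷ (H ⊗ (Hs ⊗ H)) ⊗≫
        H ◁ ((Hs ⊗ H : C) ◁ dd.d ≫ dd.d ▷ 𝟙_ C) ⊗≫ 𝟙 _ := by
        monoidal
    _ = 𝟙 _ ⊗≫ (Hs ⊗ Hs : C) ◁ hH.comul ⊗≫ (Hs ⊗ Hs : C) ◁ (H ◁ hH.comul) ⊗≫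
        Hs ◁ ((β_ Hs H).hom ▷ (H ⊗ H)) ⊗≫
        Hs ◁ (H ◁ ((β_ Hs H).hom ▷ H)) ⊗≫
        (β_ Hs H).hom ▷ (H ⊗ (Hs ⊗ H)) ⊗≫
        H ◁ (dd.d ▷ (Hs ⊗ H) ≫ 𝟙_ C ◁ dd.d) ⊗≫ 𝟙 _ := by
        rw [whisker_exchange]
    -- f3 : swap the (g,h₂) crossing past the (f,h₁) crossing
    _ = 𝟙 _ ⊗≫ (Hs ⊗ Hs : C) ◁ hH.comul ⊗≫ (Hs ⊗ Hs : C) ◁ (H ◁ hH.comul) ⊗≫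
        Hs ◁ ((β_ Hs H).hom ▷ (H ⊗ H)) ⊗≫
        ((Hs ⊗ H : C) ◁ ((β_ Hs H).hom ▷ H) ≫ (β_ Hs H).hom ▷ ((H ⊗ Hs) ⊗ H)) ⊗≫
        H ◁ (dd.d ▷ (Hs ⊗ H)) ⊗≫
        H ◁ dd.d ⊗≫ 𝟙 _ := by
        monoidal
    _ = 𝟙 _ ⊗≫ (Hs ⊗ Hs : C) ◁ hH.comul ⊗≫ (Hs ⊗ Hs : C) ◁ (H ◁ hH.comul) ⊗≫
        Hs ◁ ((β_ Hs H).hom ▷ (H ⊗ H)) ⊗≫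
        ((β_ Hs H).hom ▷ ((Hs ⊗ H) ⊗ H) ≫ (H ⊗ Hs : C) ◁ ((β_ Hs H).hom ▷ H)) ⊗≫
        H ◁ (dd.d ▷ (Hs ⊗ H)) ⊗≫
        H ◁ dd.d ⊗≫ 𝟙 _ := by
        rw [whisker_exchange]
    _ = MID1 dd hH.comul := by
        dsimp only [MID1]; monoidal


theorem slide_pair (dd : DualData H Hs) :
    (α_ Hs H H).hom ≫ Hs ◁ (β_ H H).hom ≫ (α_ Hs H H).inv ≫ (β_ Hs H).hom ▷ H ≫
      (α_ H Hs H).hom ≫ H ◁ dd.d ≫ (ρ_ H).hom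
      = dd.d ▷ H ≫ (λ_ H).hom := by
  have h := (braiding_naturality_left dd.d H).symm
  rw [braiding_tensor_left_hom, braiding_tensorUnit_left] at h
  have h2 := congrArg (fun t => t ≫ (ρ_ H).hom) h
  simpa [Category.assoc] using h2

/-- common middle form for part 3 -/
noncomputable def MID3 (dd : DualData H Hs) (hH : HopfData H) : Hs ⊗ (H ⊗ H) ⟶ H :=
  𝟙 (Hs ⊗ (H ⊗ H)) ⊗≫
    Hs ◁ (hH.comul ▷ H) ⊗≫
    comulDual dd hH.mul ▷ ((H ⊗ H) ⊗ H) ⊗≫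
    Hs ◁ ((β_ Hs H).hom ▷ (H ⊗ H)) ⊗≫
    (β_ Hs H).hom ▷ (Hs ⊗ (H ⊗ H)) ⊗≫
    H ◁ (Hs ◁ (dd.d ▷ H)) ⊗≫
    H ◁ (Hs ◁ hH.comul) ⊗≫
    H ◁ ((β_ Hs H).hom ▷ H) ⊗≫
    H ◁ (H ◁ dd.d) ⊗≫
    hH.mul ⊗≫ 𝟙 H

theorem part3_lhs (dd : DualData H Hs) (hH : HopfData H) :
    (Hs ◁ hH.mul) ≫ actHat dd hH.comul = MID3 dd hH := by
  calc _ = 𝟙 _ ⊗≫ Hs ◁ (hH.mul ≫ hH.comul) ⊗≫ (β_ Hs H).hom ▷ H ⊗≫ H ◁ dd.d ⊗≫ 𝟙 _ := by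
        dsimp only [actHat]; monoidal
    _ = 𝟙 _ ⊗≫ Hs ◁ (hH.comul ▷ H) ⊗≫ Hs ◁ ((H ⊗ H : C) ◁ hH.comul) ⊗≫
        Hs ◁ (H ◁ ((β_ H H).hom ▷ H)) ⊗≫
        Hs ◁ (hH.mul ▷ (H ⊗ H)) ⊗≫
        ((Hs ⊗ H : C) ◁ hH.mul ≫ (β_ Hs H).hom ▷ H) ⊗≫ H ◁ dd.d ⊗≫ 𝟙 _ := by
        rw [hH.mul_comul]; dsimp only [midSwap]
        simp only [MonoidalCategory.tensorHom_def]; monoidal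
    _ = 𝟙 _ ⊗≫ Hs ◁ (hH.comul ▷ H) ⊗≫ Hs ◁ ((H ⊗ H : C) ◁ hH.comul) ⊗≫
        Hs ◁ (H ◁ ((β_ H H).hom ▷ H)) ⊗≫
        Hs ◁ (hH.mul ▷ (H ⊗ H)) ⊗≫
        ((β_ Hs H).hom ▷ (H ⊗ H) ≫ (H ⊗ Hs : C) ◁ hH.mul) ⊗≫ H ◁ dd.d ⊗≫ 𝟙 _ := by
        rw [whisker_exchange]
    _ = 𝟙 _ ⊗≫ Hs ◁ (hH.comul ▷ H) ⊗≫ Hs ◁ ((H ⊗ H : C) ◁ hH.comul) ⊗≫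
        Hs ◁ (H ◁ ((β_ H H).hom ▷ H)) ⊗≫
        ((Hs ◁ hH.mul ≫ (β_ Hs H).hom) ▷ (H ⊗ H)) ⊗≫
        H ◁ (Hs ◁ hH.mul ≫ dd.d) ⊗≫ 𝟙 _ := by
        monoidal
    _ = 𝟙 _ ⊗≫ Hs ◁ (hH.comul ▷ H) ⊗≫ Hs ◁ ((H ⊗ H : C) ◁ hH.comul) ⊗≫
        Hs ◁ (H ◁ ((β_ H H).hom ▷ H)) ⊗≫
        (((β_ Hs (H ⊗ H)).hom ≫ hH.mul ▷ Hs) ▷ (H ⊗ H)) ⊗≫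
        H ◁ (Hs ◁ hH.mul ≫ dd.d) ⊗≫ 𝟙 _ := by
        rw [braiding_naturality_right]
    _ = 𝟙 _ ⊗≫ Hs ◁ (hH.comul ▷ H) ⊗≫ Hs ◁ ((H ⊗ H : C) ◁ hH.comul) ⊗≫
        Hs ◁ (H ◁ ((β_ H H).hom ▷ H)) ⊗≫
        (((β_ Hs (H ⊗ H)).hom ≫ hH.mul ▷ Hs) ▷ (H ⊗ H)) ⊗≫
        H ◁ (comulDual dd hH.mul ▷ (H ⊗ H) ≫ pairHH dd.d) ⊗≫ 𝟙 _ := by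
        rw [← T2]
    _ = 𝟙 _ ⊗≫ Hs ◁ (hH.comul ▷ H) ⊗≫ Hs ◁ ((H ⊗ H : C) ◁ hH.comul) ⊗≫
        Hs ◁ (H ◁ ((β_ H H).hom ▷ H)) ⊗≫
        (β_ Hs (H ⊗ H)).hom ▷ (H ⊗ H) ⊗≫
        (hH.mul ▷ (Hs ⊗ (H ⊗ H)) ≫ H ◁ (comulDual dd hH.mul ▷ (H ⊗ H))) ⊗≫
        H ◁ pairHH dd.d ⊗≫ 𝟙 _ := by
        monoidal
    _ = 𝟙 _ ⊗≫ Hs ◁ (hH.comul ▷ H) ⊗≫ Hs ◁ ((H ⊗ H : C) ◁ hH.comul) ⊗≫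
        Hs ◁ (H ◁ ((β_ H H).hom ▷ H)) ⊗≫
        (β_ Hs (H ⊗ H)).hom ▷ (H ⊗ H) ⊗≫
        ((H ⊗ H : C) ◁ (comulDual dd hH.mul ▷ (H ⊗ H)) ≫
          hH.mul ▷ ((Hs ⊗ Hs) ⊗ (H ⊗ H))) ⊗≫
        H ◁ pairHH dd.d ⊗≫ 𝟙 _ := by
        rw [← whisker_exchange]
    _ = 𝟙 _ ⊗≫ Hs ◁ (hH.comul ▷ H) ⊗≫ Hs ◁ ((H ⊗ H : C) ◁ hH.comul) ⊗≫
        Hs ◁ (H ◁ ((β_ H H).hom ▷ H)) ⊗≫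
        (((β_ Hs (H ⊗ H)).hom ≫ (H ⊗ H : C) ◁ comulDual dd hH.mul) ▷ (H ⊗ H)) ⊗≫
        hH.mul ▷ ((Hs ⊗ Hs) ⊗ (H ⊗ H)) ⊗≫
        H ◁ pairHH dd.d ⊗≫ 𝟙 _ := by
        monoidal
    _ = 𝟙 _ ⊗≫ Hs ◁ (hH.comul ▷ H) ⊗≫ Hs ◁ ((H ⊗ H : C) ◁ hH.comul) ⊗≫
        Hs ◁ (H ◁ ((β_ H H).hom ▷ H)) ⊗≫
        ((comulDual dd hH.mul ▷ (H ⊗ H) ≫ (β_ (Hs ⊗ Hs) (H ⊗ H)).hom) ▷ (H ⊗ H)) ⊗≫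
        hH.mul ▷ ((Hs ⊗ Hs) ⊗ (H ⊗ H)) ⊗≫
        H ◁ pairHH dd.d ⊗≫ 𝟙 _ := by
        rw [← braiding_naturality_left]
    -- expand block crossings and pairHH
    _ = 𝟙 _ ⊗≫ Hs ◁ (hH.comul ▷ H) ⊗≫ Hs ◁ ((H ⊗ H : C) ◁ hH.comul) ⊗≫
        (Hs ◁ midSwap H H H H ≫ comulDual dd hH.mul ▷ ((H ⊗ H) ⊗ (H ⊗ H))) ⊗≫
        Hs ◁ ((β_ Hs H).hom ▷ (H ⊗ (H ⊗ H))) ⊗≫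
        (β_ Hs H).hom ▷ (Hs ⊗ (H ⊗ (H ⊗ H))) ⊗≫
        H ◁ (Hs ◁ ((β_ Hs H).hom ▷ (H ⊗ H))) ⊗≫
        H ◁ ((β_ Hs H).hom ▷ (Hs ⊗ (H ⊗ H))) ⊗≫
        hH.mul ▷ ((Hs ⊗ Hs) ⊗ (H ⊗ H)) ⊗≫
        H ◁ (Hs ◁ (dd.d ▷ H)) ⊗≫
        H ◁ dd.d ⊗≫ 𝟙 _ := by
        simp only [braiding_tensor_right_hom, braiding_tensor_left_hom]
        dsimp only [pairHH, midSwap]; monoidal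
    _ = 𝟙 _ ⊗≫ Hs ◁ (hH.comul ▷ H) ⊗≫ Hs ◁ ((H ⊗ H : C) ◁ hH.comul) ⊗≫
        (comulDual dd hH.mul ▷ ((H ⊗ H) ⊗ (H ⊗ H)) ≫
          (Hs ⊗ Hs : C) ◁ midSwap H H H H) ⊗≫
        Hs ◁ ((β_ Hs H).hom ▷ (H ⊗ (H ⊗ H))) ⊗≫
        (β_ Hs H).hom ▷ (Hs ⊗ (H ⊗ (H ⊗ H))) ⊗≫
        H ◁ (Hs ◁ ((β_ Hs H).hom ▷ (H ⊗ H))) ⊗≫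
        H ◁ ((β_ Hs H).hom ▷ (Hs ⊗ (H ⊗ H))) ⊗≫
        hH.mul ▷ ((Hs ⊗ Hs) ⊗ (H ⊗ H)) ⊗≫
        H ◁ (Hs ◁ (dd.d ▷ H)) ⊗≫
        H ◁ dd.d ⊗≫ 𝟙 _ := by
        rw [whisker_exchange]
    -- move the (h₂,k₁) crossing past the two (·,h₁) crossings
    _ = 𝟙 _ ⊗≫ Hs ◁ (hH.comul ▷ H) ⊗≫ Hs ◁ ((H ⊗ H : C) ◁ hH.comul) ⊗≫
        comulDual dd hH.mul ▷ ((H ⊗ H) ⊗ (H ⊗ H)) ⊗≫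
        ((Hs ⊗ (Hs ⊗ H) : C) ◁ ((α_ H H H).inv ≫ (β_ H H).hom ▷ H ≫ (α_ H H H).hom) ≫
          (Hs ◁ (β_ Hs H).hom) ▷ (H ⊗ (H ⊗ H))) ⊗≫
        (β_ Hs H).hom ▷ (Hs ⊗ (H ⊗ (H ⊗ H))) ⊗≫
        H ◁ (Hs ◁ ((β_ Hs H).hom ▷ (H ⊗ H))) ⊗≫
        H ◁ ((β_ Hs H).hom ▷ (Hs ⊗ (H ⊗ H))) ⊗≫
        hH.mul ▷ ((Hs ⊗ Hs) ⊗ (H ⊗ H)) ⊗≫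
        H ◁ (Hs ◁ (dd.d ▷ H)) ⊗≫
        H ◁ dd.d ⊗≫ 𝟙 _ := by
        dsimp only [midSwap]; monoidal
    _ = 𝟙 _ ⊗≫ Hs ◁ (hH.comul ▷ H) ⊗≫ Hs ◁ ((H ⊗ H : C) ◁ hH.comul) ⊗≫
        comulDual dd hH.mul ▷ ((H ⊗ H) ⊗ (H ⊗ H)) ⊗≫
        ((Hs ◁ (β_ Hs H).hom) ▷ (H ⊗ (H ⊗ H)) ≫
          (Hs ⊗ (H ⊗ Hs) : C) ◁ ((α_ H H H).inv ≫ (β_ H H).hom ▷ H ≫ (α_ H H H).hom)) ⊗≫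
        (β_ Hs H).hom ▷ (Hs ⊗ (H ⊗ (H ⊗ H))) ⊗≫
        H ◁ (Hs ◁ ((β_ Hs H).hom ▷ (H ⊗ H))) ⊗≫
        H ◁ ((β_ Hs H).hom ▷ (Hs ⊗ (H ⊗ H))) ⊗≫
        hH.mul ▷ ((Hs ⊗ Hs) ⊗ (H ⊗ H)) ⊗≫
        H ◁ (Hs ◁ (dd.d ▷ H)) ⊗≫
        H ◁ dd.d ⊗≫ 𝟙 _ := by
        rw [whisker_exchange]
    _ = 𝟙 _ ⊗≫ Hs ◁ (hH.comul ▷ H) ⊗≫ Hs ◁ ((H ⊗ H : C) ◁ hH.comul) ⊗≫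
        comulDual dd hH.mul ▷ ((H ⊗ H) ⊗ (H ⊗ H)) ⊗≫
        Hs ◁ ((β_ Hs H).hom ▷ (H ⊗ (H ⊗ H))) ⊗≫
        (((Hs ⊗ H : C) ⊗ Hs) ◁ ((α_ H H H).inv ≫ (β_ H H).hom ▷ H ≫ (α_ H H H).hom) ≫
          ((β_ Hs H).hom ▷ Hs) ▷ (H ⊗ (H ⊗ H))) ⊗≫
        H ◁ (Hs ◁ ((β_ Hs H).hom ▷ (H ⊗ H))) ⊗≫
        H ◁ ((β_ Hs H).hom ▷ (Hs ⊗ (H ⊗ H))) ⊗≫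
        hH.mul ▷ ((Hs ⊗ Hs) ⊗ (H ⊗ H)) ⊗≫
        H ◁ (Hs ◁ (dd.d ▷ H)) ⊗≫
        H ◁ dd.d ⊗≫ 𝟙 _ := by
        monoidal
    _ = 𝟙 _ ⊗≫ Hs ◁ (hH.comul ▷ H) ⊗≫ Hs ◁ ((H ⊗ H : C) ◁ hH.comul) ⊗≫
        comulDual dd hH.mul ▷ ((H ⊗ H) ⊗ (H ⊗ H)) ⊗≫
        Hs ◁ ((β_ Hs H).hom ▷ (H ⊗ (H ⊗ H))) ⊗≫
        (((β_ Hs H).hom ▷ Hs) ▷ (H ⊗ (H ⊗ H)) ≫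
          ((H ⊗ Hs : C) ⊗ Hs) ◁ ((α_ H H H).inv ≫ (β_ H H).hom ▷ H ≫ (α_ H H H).hom)) ⊗≫
        H ◁ (Hs ◁ ((β_ Hs H).hom ▷ (H ⊗ H))) ⊗≫
        H ◁ ((β_ Hs H).hom ▷ (Hs ⊗ (H ⊗ H))) ⊗≫
        hH.mul ▷ ((Hs ⊗ Hs) ⊗ (H ⊗ H)) ⊗≫
        H ◁ (Hs ◁ (dd.d ▷ H)) ⊗≫
        H ◁ dd.d ⊗≫ 𝟙 _ := by
        rw [whisker_exchange]
    -- move m₁ past the (f₂,h₂) cup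
    _ = 𝟙 _ ⊗≫ Hs ◁ (hH.comul ▷ H) ⊗≫ Hs ◁ ((H ⊗ H : C) ◁ hH.comul) ⊗≫
        comulDual dd hH.mul ▷ ((H ⊗ H) ⊗ (H ⊗ H)) ⊗≫
        Hs ◁ ((β_ Hs H).hom ▷ (H ⊗ (H ⊗ H))) ⊗≫
        (β_ Hs H).hom ▷ (Hs ⊗ (H ⊗ (H ⊗ H))) ⊗≫
        ((H ⊗ Hs : C) ⊗ Hs) ◁ ((α_ H H H).inv ≫ (β_ H H).hom ▷ H ≫ (α_ H H H).hom) ⊗≫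
        H ◁ (Hs ◁ ((β_ Hs H).hom ▷ (H ⊗ H))) ⊗≫
        H ◁ ((β_ Hs H).hom ▷ (Hs ⊗ (H ⊗ H))) ⊗≫
        (hH.mul ▷ (Hs ⊗ ((Hs ⊗ H) ⊗ H)) ≫ H ◁ (Hs ◁ (dd.d ▷ H))) ⊗≫
        H ◁ dd.d ⊗≫ 𝟙 _ := by
        monoidal
    _ = 𝟙 _ ⊗≫ Hs ◁ (hH.comul ▷ H) ⊗≫ Hs ◁ ((H ⊗ H : C) ◁ hH.comul) ⊗≫
        comulDual dd hH.mul ▷ ((H ⊗ H) ⊗ (H ⊗ H)) ⊗≫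
        Hs ◁ ((β_ Hs H).hom ▷ (H ⊗ (H ⊗ H))) ⊗≫
        (β_ Hs H).hom ▷ (Hs ⊗ (H ⊗ (H ⊗ H))) ⊗≫
        ((H ⊗ Hs : C) ⊗ Hs) ◁ ((α_ H H H).inv ≫ (β_ H H).hom ▷ H ≫ (α_ H H H).hom) ⊗≫
        H ◁ (Hs ◁ ((β_ Hs H).hom ▷ (H ⊗ H))) ⊗≫
        H ◁ ((β_ Hs H).hom ▷ (Hs ⊗ (H ⊗ H))) ⊗≫
        ((H ⊗ H : C) ◁ (Hs ◁ (dd.d ▷ H)) ≫ hH.mul ▷ (Hs ⊗ (𝟙_ C ⊗ H))) ⊗≫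
        H ◁ dd.d ⊗≫ 𝟙 _ := by
        rw [← whisker_exchange]
    -- move the (f₁,k₁) crossing past the (f₂,h₂) cup
    _ = 𝟙 _ ⊗≫ Hs ◁ (hH.comul ▷ H) ⊗≫ Hs ◁ ((H ⊗ H : C) ◁ hH.comul) ⊗≫
        comulDual dd hH.mul ▷ ((H ⊗ H) ⊗ (H ⊗ H)) ⊗≫
        Hs ◁ ((β_ Hs H).hom ▷ (H ⊗ (H ⊗ H))) ⊗≫
        (β_ Hs H).hom ▷ (Hs ⊗ (H ⊗ (H ⊗ H))) ⊗≫
        ((H ⊗ Hs : C) ⊗ Hs) ◁ ((α_ H H H).inv ≫ (β_ H H).hom ▷ H ≫ (α_ H H H).hom) ⊗≫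
        H ◁ (Hs ◁ ((β_ Hs H).hom ▷ (H ⊗ H))) ⊗≫
        ((H ◁ (β_ Hs H).hom) ▷ ((Hs ⊗ H) ⊗ H) ≫ (H ⊗ (H ⊗ Hs) : C) ◁ (dd.d ▷ H)) ⊗≫
        hH.mul ▷ (Hs ⊗ H) ⊗≫
        H ◁ dd.d ⊗≫ 𝟙 _ := by
        monoidal
    _ = 𝟙 _ ⊗≫ Hs ◁ (hH.comul ▷ H) ⊗≫ Hs ◁ ((H ⊗ H : C) ◁ hH.comul) ⊗≫
        comulDual dd hH.mul ▷ ((H ⊗ H) ⊗ (H ⊗ H)) ⊗≫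
        Hs ◁ ((β_ Hs H).hom ▷ (H ⊗ (H ⊗ H))) ⊗≫
        (β_ Hs H).hom ▷ (Hs ⊗ (H ⊗ (H ⊗ H))) ⊗≫
        ((H ⊗ Hs : C) ⊗ Hs) ◁ ((α_ H H H).inv ≫ (β_ H H).hom ▷ H ≫ (α_ H H H).hom) ⊗≫
        H ◁ (Hs ◁ ((β_ Hs H).hom ▷ (H ⊗ H))) ⊗≫
        ((H ⊗ (Hs ⊗ H) : C) ◁ (dd.d ▷ H) ≫ (H ◁ (β_ Hs H).hom) ▷ (𝟙_ C ⊗ H)) ⊗≫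
        hH.mul ▷ (Hs ⊗ H) ⊗≫
        H ◁ dd.d ⊗≫ 𝟙 _ := by
        rw [← whisker_exchange]
    -- move m₁ past the (f₁,k₂) cup
    _ = 𝟙 _ ⊗≫ Hs ◁ (hH.comul ▷ H) ⊗≫ Hs ◁ ((H ⊗ H : C) ◁ hH.comul) ⊗≫
        comulDual dd hH.mul ▷ ((H ⊗ H) ⊗ (H ⊗ H)) ⊗≫
        Hs ◁ ((β_ Hs H).hom ▷ (H ⊗ (H ⊗ H))) ⊗≫
        (β_ Hs H).hom ▷ (Hs ⊗ (H ⊗ (H ⊗ H))) ⊗≫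
        ((H ⊗ Hs : C) ⊗ Hs) ◁ ((α_ H H H).inv ≫ (β_ H H).hom ▷ H ≫ (α_ H H H).hom) ⊗≫
        H ◁ (Hs ◁ ((β_ Hs H).hom ▷ (H ⊗ H))) ⊗≫
        (H ⊗ (Hs ⊗ H) : C) ◁ (dd.d ▷ H) ⊗≫
        H ◁ ((β_ Hs H).hom ▷ H) ⊗≫
        (hH.mul ▷ (Hs ⊗ H) ≫ H ◁ dd.d) ⊗≫ 𝟙 _ := by
        monoidal
    _ = 𝟙 _ ⊗≫ Hs ◁ (hH.comul ▷ H) ⊗≫ Hs ◁ ((H ⊗ H : C) ◁ hH.comul) ⊗≫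
        comulDual dd hH.mul ▷ ((H ⊗ H) ⊗ (H ⊗ H)) ⊗≫
        Hs ◁ ((β_ Hs H).hom ▷ (H ⊗ (H ⊗ H))) ⊗≫
        (β_ Hs H).hom ▷ (Hs ⊗ (H ⊗ (H ⊗ H))) ⊗≫
        ((H ⊗ Hs : C) ⊗ Hs) ◁ ((α_ H H H).inv ≫ (β_ H H).hom ▷ H ≫ (α_ H H H).hom) ⊗≫
        H ◁ (Hs ◁ ((β_ Hs H).hom ▷ (H ⊗ H))) ⊗≫
        (H ⊗ (Hs ⊗ H) : C) ◁ (dd.d ▷ H) ⊗≫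
        H ◁ ((β_ Hs H).hom ▷ H) ⊗≫
        ((H ⊗ H : C) ◁ dd.d ≫ hH.mul ▷ 𝟙_ C) ⊗≫ 𝟙 _ := by
        rw [← whisker_exchange]
    -- the unconditional cup–slide for the k₁ strand
    _ = 𝟙 _ ⊗≫ Hs ◁ (hH.comul ▷ H) ⊗≫ Hs ◁ ((H ⊗ H : C) ◁ hH.comul) ⊗≫
        comulDual dd hH.mul ▷ ((H ⊗ H) ⊗ (H ⊗ H)) ⊗≫
        Hs ◁ ((β_ Hs H).hom ▷ (H ⊗ (H ⊗ H))) ⊗≫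
        (β_ Hs H).hom ▷ (Hs ⊗ (H ⊗ (H ⊗ H))) ⊗≫
        H ◁ (Hs ◁ (((α_ Hs H H).hom ≫ Hs ◁ (β_ H H).hom ≫ (α_ Hs H H).inv ≫
          (β_ Hs H).hom ▷ H ≫ (α_ H Hs H).hom ≫ H ◁ dd.d ≫ (ρ_ H).hom) ▷ H)) ⊗≫
        H ◁ ((β_ Hs H).hom ▷ H) ⊗≫
        H ◁ (H ◁ dd.d) ⊗≫ hH.mul ⊗≫ 𝟙 _ := by
        monoidal
    _ = 𝟙 _ ⊗≫ Hs ◁ (hH.comul ▷ H) ⊗≫ Hs ◁ ((H ⊗ H : C) ◁ hH.comul) ⊗≫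
        comulDual dd hH.mul ▷ ((H ⊗ H) ⊗ (H ⊗ H)) ⊗≫
        Hs ◁ ((β_ Hs H).hom ▷ (H ⊗ (H ⊗ H))) ⊗≫
        (β_ Hs H).hom ▷ (Hs ⊗ (H ⊗ (H ⊗ H))) ⊗≫
        H ◁ (Hs ◁ ((dd.d ▷ H ≫ (λ_ H).hom) ▷ H)) ⊗≫
        H ◁ ((β_ Hs H).hom ▷ H) ⊗≫
        H ◁ (H ◁ dd.d) ⊗≫ hH.mul ⊗≫ 𝟙 _ := by
        rw [slide_pair]
    -- finally move Δk to its place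
    _ = 𝟙 _ ⊗≫ Hs ◁ (hH.comul ▷ H) ⊗≫
        (Hs ◁ ((H ⊗ H : C) ◁ hH.comul) ≫
          comulDual dd hH.mul ▷ ((H ⊗ H) ⊗ (H ⊗ H))) ⊗≫
        Hs ◁ ((β_ Hs H).hom ▷ (H ⊗ (H ⊗ H))) ⊗≫
        (β_ Hs H).hom ▷ (Hs ⊗ (H ⊗ (H ⊗ H))) ⊗≫
        H ◁ (Hs ◁ ((dd.d ▷ H) ▷ H)) ⊗≫
        H ◁ ((β_ Hs H).hom ▷ H) ⊗≫
        H ◁ (H ◁ dd.d) ⊗≫ hH.mul ⊗≫ 𝟙 _ := by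
        monoidal
    _ = 𝟙 _ ⊗≫ Hs ◁ (hH.comul ▷ H) ⊗≫
        (comulDual dd hH.mul ▷ ((H ⊗ H) ⊗ H) ≫
          (Hs ⊗ Hs : C) ◁ ((H ⊗ H : C) ◁ hH.comul)) ⊗≫
        Hs ◁ ((β_ Hs H).hom ▷ (H ⊗ (H ⊗ H))) ⊗≫
        (β_ Hs H).hom ▷ (Hs ⊗ (H ⊗ (H ⊗ H))) ⊗≫
        H ◁ (Hs ◁ ((dd.d ▷ H) ▷ H)) ⊗≫
        H ◁ ((β_ Hs H).hom ▷ H) ⊗≫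
        H ◁ (H ◁ dd.d) ⊗≫ hH.mul ⊗≫ 𝟙 _ := by
        rw [← whisker_exchange]
    _ = 𝟙 _ ⊗≫ Hs ◁ (hH.comul ▷ H) ⊗≫
        comulDual dd hH.mul ▷ ((H ⊗ H) ⊗ H) ⊗≫
        ((Hs ⊗ ((Hs ⊗ H) ⊗ H) : C) ◁ hH.comul ≫
          (Hs ◁ ((β_ Hs H).hom ▷ H)) ▷ (H ⊗ H)) ⊗≫
        (β_ Hs H).hom ▷ (Hs ⊗ (H ⊗ (H ⊗ H))) ⊗≫
        H ◁ (Hs ◁ ((dd.d ▷ H) ▷ H)) ⊗≫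
        H ◁ ((β_ Hs H).hom ▷ H) ⊗≫
        H ◁ (H ◁ dd.d) ⊗≫ hH.mul ⊗≫ 𝟙 _ := by
        monoidal
    _ = 𝟙 _ ⊗≫ Hs ◁ (hH.comul ▷ H) ⊗≫
        comulDual dd hH.mul ▷ ((H ⊗ H) ⊗ H) ⊗≫
        ((Hs ◁ ((β_ Hs H).hom ▷ H)) ▷ H ≫
          (Hs ⊗ ((H ⊗ Hs) ⊗ H) : C) ◁ hH.comul) ⊗≫
        (β_ Hs H).hom ▷ (Hs ⊗ (H ⊗ (H ⊗ H))) ⊗≫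
        H ◁ (Hs ◁ ((dd.d ▷ H) ▷ H)) ⊗≫
        H ◁ ((β_ Hs H).hom ▷ H) ⊗≫
        H ◁ (H ◁ dd.d) ⊗≫ hH.mul ⊗≫ 𝟙 _ := by
        rw [whisker_exchange]
    _ = 𝟙 _ ⊗≫ Hs ◁ (hH.comul ▷ H) ⊗≫
        comulDual dd hH.mul ▷ ((H ⊗ H) ⊗ H) ⊗≫
        Hs ◁ ((β_ Hs H).hom ▷ (H ⊗ H)) ⊗≫
        ((Hs ⊗ H : C) ◁ ((Hs ⊗ H : C) ◁ hH.comul) ≫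
          (β_ Hs H).hom ▷ ((Hs ⊗ H) ⊗ (H ⊗ H))) ⊗≫
        H ◁ (Hs ◁ ((dd.d ▷ H) ▷ H)) ⊗≫
        H ◁ ((β_ Hs H).hom ▷ H) ⊗≫
        H ◁ (H ◁ dd.d) ⊗≫ hH.mul ⊗≫ 𝟙 _ := by
        monoidal
    _ = 𝟙 _ ⊗≫ Hs ◁ (hH.comul ▷ H) ⊗≫
        comulDual dd hH.mul ▷ ((H ⊗ H) ⊗ H) ⊗≫
        Hs ◁ ((β_ Hs H).hom ▷ (H ⊗ H)) ⊗≫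
        ((β_ Hs H).hom ▷ ((Hs ⊗ H) ⊗ H) ≫
          (H ⊗ Hs : C) ◁ ((Hs ⊗ H : C) ◁ hH.comul)) ⊗≫
        H ◁ (Hs ◁ ((dd.d ▷ H) ▷ H)) ⊗≫
        H ◁ ((β_ Hs H).hom ▷ H) ⊗≫
        H ◁ (H ◁ dd.d) ⊗≫ hH.mul ⊗≫ 𝟙 _ := by
        rw [whisker_exchange]
    _ = 𝟙 _ ⊗≫ Hs ◁ (hH.comul ▷ H) ⊗≫
        comulDual dd hH.mul ▷ ((H ⊗ H) ⊗ H) ⊗≫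
        Hs ◁ ((β_ Hs H).hom ▷ (H ⊗ H)) ⊗≫
        (β_ Hs H).hom ▷ (Hs ⊗ (H ⊗ H)) ⊗≫
        ((H ⊗ (Hs ⊗ (Hs ⊗ H)) : C) ◁ hH.comul ≫
          (H ◁ (Hs ◁ dd.d)) ▷ (H ⊗ H)) ⊗≫
        H ◁ ((β_ Hs H).hom ▷ H) ⊗≫
        H ◁ (H ◁ dd.d) ⊗≫ hH.mul ⊗≫ 𝟙 _ := by
        monoidal
    _ = 𝟙 _ ⊗≫ Hs ◁ (hH.comul ▷ H) ⊗≫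
        comulDual dd hH.mul ▷ ((H ⊗ H) ⊗ H) ⊗≫
        Hs ◁ ((β_ Hs H).hom ▷ (H ⊗ H)) ⊗≫
        (β_ Hs H).hom ▷ (Hs ⊗ (H ⊗ H)) ⊗≫
        ((H ◁ (Hs ◁ dd.d)) ▷ H ≫
          (H ⊗ (Hs ⊗ 𝟙_ C) : C) ◁ hH.comul) ⊗≫
        H ◁ ((β_ Hs H).hom ▷ H) ⊗≫
        H ◁ (H ◁ dd.d) ⊗≫ hH.mul ⊗≫ 𝟙 _ := by
        rw [whisker_exchange]
    _ = MID3 dd hH := by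
        dsimp only [MID3]; monoidal


theorem slide_single (dd : DualData H Hs) :
    (α_ Hs Hs H).inv ≫ (β_ Hs Hs).hom ▷ H ≫ (α_ Hs Hs H).hom ≫ Hs ◁ (β_ Hs H).hom ≫
      (α_ Hs H Hs).inv ≫ dd.d ▷ Hs ≫ (λ_ Hs).hom
      = Hs ◁ dd.d ≫ (ρ_ Hs).hom := by
  have h := (braiding_naturality_right Hs dd.d).symm
  rw [braiding_tensor_right_hom, braiding_tensorUnit_right] at h
  have h2 := congrArg (fun t => t ≫ (λ_ Hs).hom) h
  simpa [Category.assoc] using h2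

theorem part3_rhs (dd : DualData H Hs) (hH : HopfData H) :
    (comulHat dd hH.mul ▷ (H ⊗ H)) ≫ midSwap Hs Hs H H ≫
      (actHat dd hH.comul ⊗ₘ actHat dd hH.comul) ≫ hH.mul
      = MID3 dd hH := by
  calc _ = 𝟙 _ ⊗≫ comulDual dd hH.mul ▷ (H ⊗ H) ⊗≫ (β_ Hs Hs).hom ▷ (H ⊗ H) ⊗≫
        Hs ◁ (((β_ Hs H).hom ≫ hH.comul ▷ Hs) ▷ H) ⊗≫
        (β_ Hs H).hom ▷ (H ⊗ (Hs ⊗ H)) ⊗≫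
        H ◁ (dd.d ▷ (Hs ⊗ H)) ⊗≫
        H ◁ (Hs ◁ hH.comul) ⊗≫
        H ◁ ((β_ Hs H).hom ▷ H) ⊗≫
        H ◁ (H ◁ dd.d) ⊗≫ hH.mul ⊗≫ 𝟙 _ := by
        dsimp only [comulHat, midSwap, actHat]
        simp only [MonoidalCategory.tensorHom_def]; monoidal
    _ = 𝟙 _ ⊗≫ comulDual dd hH.mul ▷ (H ⊗ H) ⊗≫ (β_ Hs Hs).hom ▷ (H ⊗ H) ⊗≫
        Hs ◁ ((Hs ◁ hH.comul ≫ (β_ Hs (H ⊗ H)).hom) ▷ H) ⊗≫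
        (β_ Hs H).hom ▷ (H ⊗ (Hs ⊗ H)) ⊗≫
        H ◁ (dd.d ▷ (Hs ⊗ H)) ⊗≫
        H ◁ (Hs ◁ hH.comul) ⊗≫
        H ◁ ((β_ Hs H).hom ▷ H) ⊗≫
        H ◁ (H ◁ dd.d) ⊗≫ hH.mul ⊗≫ 𝟙 _ := by
        rw [← braiding_naturality_right]
    _ = 𝟙 _ ⊗≫ comulDual dd hH.mul ▷ (H ⊗ H) ⊗≫
        ((β_ Hs Hs).hom ▷ (H ⊗ H) ≫ (Hs ⊗ Hs : C) ◁ (hH.comul ▷ H)) ⊗≫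
        Hs ◁ (((β_ Hs H).hom ▷ H) ▷ H) ⊗≫
        Hs ◁ ((H ◁ (β_ Hs H).hom) ▷ H) ⊗≫
        (β_ Hs H).hom ▷ (H ⊗ (Hs ⊗ H)) ⊗≫
        H ◁ (dd.d ▷ (Hs ⊗ H)) ⊗≫
        H ◁ (Hs ◁ hH.comul) ⊗≫
        H ◁ ((β_ Hs H).hom ▷ H) ⊗≫
        H ◁ (H ◁ dd.d) ⊗≫ hH.mul ⊗≫ 𝟙 _ := by
        rw [braiding_tensor_right_hom]; monoidal
    _ = 𝟙 _ ⊗≫ comulDual dd hH.mul ▷ (H ⊗ H) ⊗≫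
        ((Hs ⊗ Hs : C) ◁ (hH.comul ▷ H) ≫ (β_ Hs Hs).hom ▷ ((H ⊗ H) ⊗ H)) ⊗≫
        Hs ◁ (((β_ Hs H).hom ▷ H) ▷ H) ⊗≫
        Hs ◁ ((H ◁ (β_ Hs H).hom) ▷ H) ⊗≫
        (β_ Hs H).hom ▷ (H ⊗ (Hs ⊗ H)) ⊗≫
        H ◁ (dd.d ▷ (Hs ⊗ H)) ⊗≫
        H ◁ (Hs ◁ hH.comul) ⊗≫
        H ◁ ((β_ Hs H).hom ▷ H) ⊗≫
        H ◁ (H ◁ dd.d) ⊗≫ hH.mul ⊗≫ 𝟙 _ := by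
        rw [← whisker_exchange]
    -- commute the (f₁,h₂) crossing past the (f₂,h₁) crossing
    _ = 𝟙 _ ⊗≫ comulDual dd hH.mul ▷ (H ⊗ H) ⊗≫
        (Hs ⊗ Hs : C) ◁ (hH.comul ▷ H) ⊗≫
        (β_ Hs Hs).hom ▷ ((H ⊗ H) ⊗ H) ⊗≫
        Hs ◁ (((β_ Hs H).hom ▷ H) ▷ H) ⊗≫
        ((Hs ⊗ H : C) ◁ ((β_ Hs H).hom ▷ H) ≫ (β_ Hs H).hom ▷ ((H ⊗ Hs) ⊗ H)) ⊗≫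
        H ◁ (dd.d ▷ (Hs ⊗ H)) ⊗≫
        H ◁ (Hs ◁ hH.comul) ⊗≫
        H ◁ ((β_ Hs H).hom ▷ H) ⊗≫
        H ◁ (H ◁ dd.d) ⊗≫ hH.mul ⊗≫ 𝟙 _ := by
        monoidal
    _ = 𝟙 _ ⊗≫ comulDual dd hH.mul ▷ (H ⊗ H) ⊗≫
        (Hs ⊗ Hs : C) ◁ (hH.comul ▷ H) ⊗≫
        (β_ Hs Hs).hom ▷ ((H ⊗ H) ⊗ H) ⊗≫
        Hs ◁ (((β_ Hs H).hom ▷ H) ▷ H) ⊗≫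
        ((β_ Hs H).hom ▷ ((Hs ⊗ H) ⊗ H) ≫ (H ⊗ Hs : C) ◁ ((β_ Hs H).hom ▷ H)) ⊗≫
        H ◁ (dd.d ▷ (Hs ⊗ H)) ⊗≫
        H ◁ (Hs ◁ hH.comul) ⊗≫
        H ◁ ((β_ Hs H).hom ▷ H) ⊗≫
        H ◁ (H ◁ dd.d) ⊗≫ hH.mul ⊗≫ 𝟙 _ := by
        rw [whisker_exchange]
    -- Yang–Baxter on (f₁,f₂,h₁)
    _ = 𝟙 _ ⊗≫ comulDual dd hH.mul ▷ (H ⊗ H) ⊗≫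
        (Hs ⊗ Hs : C) ◁ (hH.comul ▷ H) ⊗≫
        (((α_ Hs Hs H).inv ≫ (β_ Hs Hs).hom ▷ H ≫ (α_ Hs Hs H).hom ≫
          Hs ◁ (β_ Hs H).hom ≫ (α_ Hs H Hs).inv ≫ (β_ Hs H).hom ▷ Hs ≫
          (α_ H Hs Hs).hom) ▷ (H ⊗ H)) ⊗≫
        (H ⊗ Hs : C) ◁ ((β_ Hs H).hom ▷ H) ⊗≫
        H ◁ (dd.d ▷ (Hs ⊗ H)) ⊗≫
        H ◁ (Hs ◁ hH.comul) ⊗≫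
        H ◁ ((β_ Hs H).hom ▷ H) ⊗≫
        H ◁ (H ◁ dd.d) ⊗≫ hH.mul ⊗≫ 𝟙 _ := by
        monoidal
    _ = 𝟙 _ ⊗≫ comulDual dd hH.mul ▷ (H ⊗ H) ⊗≫
        (Hs ⊗ Hs : C) ◁ (hH.comul ▷ H) ⊗≫
        ((Hs ◁ (β_ Hs H).hom ≫ (α_ Hs H Hs).inv ≫ (β_ Hs H).hom ▷ Hs ≫
          (α_ H Hs Hs).hom ≫ H ◁ (β_ Hs Hs).hom) ▷ (H ⊗ H)) ⊗≫
        (H ⊗ Hs : C) ◁ ((β_ Hs H).hom ▷ H) ⊗≫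
        H ◁ (dd.d ▷ (Hs ⊗ H)) ⊗≫
        H ◁ (Hs ◁ hH.comul) ⊗≫
        H ◁ ((β_ Hs H).hom ▷ H) ⊗≫
        H ◁ (H ◁ dd.d) ⊗≫ hH.mul ⊗≫ 𝟙 _ := by
        rw [yang_baxter]
    -- the unconditional cup–slide for the f₁ strand
    _ = 𝟙 _ ⊗≫ comulDual dd hH.mul ▷ (H ⊗ H) ⊗≫
        (Hs ⊗ Hs : C) ◁ (hH.comul ▷ H) ⊗≫
        (Hs ◁ (β_ Hs H).hom) ▷ (H ⊗ H) ⊗≫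
        ((β_ Hs H).hom ▷ Hs) ▷ (H ⊗ H) ⊗≫
        H ◁ (((α_ Hs Hs H).inv ≫ (β_ Hs Hs).hom ▷ H ≫ (α_ Hs Hs H).hom ≫
          Hs ◁ (β_ Hs H).hom ≫ (α_ Hs H Hs).inv ≫ dd.d ▷ Hs ≫ (λ_ Hs).hom) ▷ H) ⊗≫
        H ◁ (Hs ◁ hH.comul) ⊗≫
        H ◁ ((β_ Hs H).hom ▷ H) ⊗≫
        H ◁ (H ◁ dd.d) ⊗≫ hH.mul ⊗≫ 𝟙 _ := by
        monoidal
    _ = 𝟙 _ ⊗≫ comulDual dd hH.mul ▷ (H ⊗ H) ⊗≫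
        (Hs ⊗ Hs : C) ◁ (hH.comul ▷ H) ⊗≫
        (Hs ◁ (β_ Hs H).hom) ▷ (H ⊗ H) ⊗≫
        ((β_ Hs H).hom ▷ Hs) ▷ (H ⊗ H) ⊗≫
        H ◁ ((Hs ◁ dd.d ≫ (ρ_ Hs).hom) ▷ H) ⊗≫
        H ◁ (Hs ◁ hH.comul) ⊗≫
        H ◁ ((β_ Hs H).hom ▷ H) ⊗≫
        H ◁ (H ◁ dd.d) ⊗≫ hH.mul ⊗≫ 𝟙 _ := by
        rw [slide_single]
    -- finally put Δh before the dual comultiplication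
    _ = 𝟙 _ ⊗≫ (comulDual dd hH.mul ▷ (H ⊗ H) ≫ (Hs ⊗ Hs : C) ◁ (hH.comul ▷ H)) ⊗≫
        Hs ◁ ((β_ Hs H).hom ▷ (H ⊗ H)) ⊗≫
        (β_ Hs H).hom ▷ (Hs ⊗ (H ⊗ H)) ⊗≫
        H ◁ (Hs ◁ (dd.d ▷ H)) ⊗≫
        H ◁ (Hs ◁ hH.comul) ⊗≫
        H ◁ ((β_ Hs H).hom ▷ H) ⊗≫
        H ◁ (H ◁ dd.d) ⊗≫ hH.mul ⊗≫ 𝟙 _ := by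
        monoidal
    _ = 𝟙 _ ⊗≫ (Hs ◁ (hH.comul ▷ H) ≫ comulDual dd hH.mul ▷ ((H ⊗ H) ⊗ H)) ⊗≫
        Hs ◁ ((β_ Hs H).hom ▷ (H ⊗ H)) ⊗≫
        (β_ Hs H).hom ▷ (Hs ⊗ (H ⊗ H)) ⊗≫
        H ◁ (Hs ◁ (dd.d ▷ H)) ⊗≫
        H ◁ (Hs ◁ hH.comul) ⊗≫
        H ◁ ((β_ Hs H).hom ▷ H) ⊗≫
        H ◁ (H ◁ dd.d) ⊗≫ hH.mul ⊗≫ 𝟙 _ := by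
        rw [← whisker_exchange]
    _ = MID3 dd hH := by
        dsimp only [MID3]; monoidal


end PaperAux

open PaperDefs in
/-- Lemma 1.2(1): `(H, ⇀)` is a left `H^`-module algebra, where
`⇀ = (id ⊗ d)(c_{H^,H} ⊗ id)(id ⊗ Δ)` and `H^ = ((H*)^op)^cop`. -/
theorem stmt_2 {C : Type*} [CategoryTheory.Category C]
    [CategoryTheory.MonoidalCategory C] [CategoryTheory.BraidedCategory C]
    (H Hs : C) (hH : HopfData H) (dd : DualData H Hs)
    (hc : (β_ H H).hom = (β_ H H).inv) :
    -- `⇀` is a left module structure over the algebra `H^`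
    (mulHat dd hH.comul ▷ H) ≫ actHat dd hH.comul =
      (α_ Hs Hs H).hom ≫ (Hs ◁ actHat dd hH.comul) ≫ actHat dd hH.comul ∧
    (oneDual dd hH.counit ▷ H) ≫ actHat dd hH.comul = (λ_ H).hom ∧
    -- `H` is an algebra in the category of left `H^`-modules
    (Hs ◁ hH.mul) ≫ actHat dd hH.comul =
      (comulHat dd hH.mul ▷ (H ⊗ H)) ≫ midSwap Hs Hs H H ≫
        (actHat dd hH.comul ⊗ₘ actHat dd hH.comul) ≫ hH.mul ∧
    (Hs ◁ hH.one) ≫ actHat dd hH.comul =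
      (ρ_ Hs).hom ≫ counitDual dd hH.one ≫ hH.one := by
    exact ⟨(PaperAux.part1_lhs dd hH hc).trans (PaperAux.part1_rhs dd hH).symm,
   PaperAux.part2 dd hH,
   (PaperAux.part3_lhs dd hH).trans (PaperAux.part3_rhs dd hH).symm,
   PaperAux.part4 dd hH⟩
end

section
/- Let H be a finite Hopf algebra in a braided monoidal category C with c_{H,H} = c_{H,H}^{-1} and invertible antipode S. Then the algebra morphism λ : H # H^ → H ⊗̄ H^ defined by λ = (m ⊗ d ⊗ id)(id ⊗ c_{H^,H} ⊗ id ⊗ id)(id ⊗ id ⊗ Δ ⊗ id)(id ⊗ id ⊗ b) is an isomorphism in C. -/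
open CategoryTheory Category MonoidalCategory

namespace LamAux

open PaperDefs

variable {C : Type*} [Category C] [MonoidalCategory C] [BraidedCategory C]
variable {H Hs : C}

/-! ### Bridge to Mathlib's `Hopf_` -/

/-- The underlying monoid object. -/
def toMon (hH : HopfData H) : MonObj H where
  one := hH.one
  mul := hH.mul
  one_mul := by
    have h := hH.one_mul
    rwa [Iso.inv_comp_eq, Category.comp_id] at h
  mul_one := by
    have h := hH.mul_one
    rwa [Iso.inv_comp_eq, Category.comp_id] at h
  mul_assoc := by
    have h := hH.mul_assoc
    rwa [Iso.inv_comp_eq] at h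

/-- The underlying comonoid object. -/
def toComon (hH : HopfData H) : ComonObj H where
  counit := hH.counit
  comul := hH.comul
  counit_comul := by
    rw [← cancel_mono (λ_ H).hom]; simpa using hH.counit_comul
  comul_counit := by
    rw [← cancel_mono (ρ_ H).hom]; simpa using hH.comul_counit
  comul_assoc := hH.coassoc.symm

/-- The Hopf monoid object. -/
def toHopf (hH : HopfData H) : HopfObj H :=
  letI := toMon hH
  letI := toComon hH
  { mul_comul := by
      have h := hH.mul_comul
      simp only [tensorμ, midSwap, MonoidalCategory.whiskerLeft_comp, Category.assoc] at h ⊢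
      exact h
    one_comul := by
      have h := hH.one_comul
      simp only [MonObj.tensorObj.one_def] at h ⊢
      exact h
    mul_counit := by
      have h := hH.mul_counit
      simp only [Comon.tensorObj_counit] at h ⊢
      exact h
    one_counit := hH.one_counit
    antipode := hH.antipode
    antipode_left := hH.antipode_left
    antipode_right := hH.antipode_right }

theorem antipode_comul (hH : HopfData H) :
    hH.antipode ≫ hH.comul
      = hH.comul ≫ (β_ H H).hom ≫ (hH.antipode ⊗ₘ hH.antipode) :=
  letI := toHopf hH
  HopfObj.antipode_comul H

theorem antipode_counit (hH : HopfData H) :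
    hH.antipode ≫ hH.counit = hH.counit :=
  letI := toHopf hH
  HopfObj.antipode_counit H

/-! ### The antipode identities for the co-opposite Hopf algebra -/

theorem copS_right (hH : HopfData H) (hc : (β_ H H).hom = (β_ H H).inv)
    [IsIso hH.antipode] :
    hH.comul ≫ (β_ H H).hom ≫ (H ◁ CategoryTheory.inv hH.antipode) ≫ hH.mul
      = hH.counit ≫ hH.one := by
  have hSS : (hH.antipode ⊗ₘ hH.antipode) ≫ (H ◁ CategoryTheory.inv hH.antipode)
      = hH.antipode ▷ H := by
    rw [MonoidalCategory.tensorHom_def, Category.assoc, ← MonoidalCategory.whiskerLeft_comp,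
      IsIso.hom_inv_id, MonoidalCategory.whiskerLeft_id, Category.comp_id]
  have hbb : (β_ H H).hom ≫ (β_ H H).hom = 𝟙 (H ⊗ H) := by
    nth_rewrite 2 [hc]; exact (β_ H H).hom_inv_id
  rw [← cancel_epi hH.antipode, reassoc_of% (antipode_comul hH),
    reassoc_of% (antipode_counit hH)]
  slice_lhs 3 4 => rw [BraidedCategory.braiding_naturality]
  slice_lhs 2 3 => rw [hbb]
  slice_lhs 3 4 => rw [hSS]
  simpa using hH.antipode_left

theorem copS_left (hH : HopfData H) (hc : (β_ H H).hom = (β_ H H).inv)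
    [IsIso hH.antipode] :
    hH.comul ≫ (β_ H H).hom ≫ (CategoryTheory.inv hH.antipode ▷ H) ≫ hH.mul
      = hH.counit ≫ hH.one := by
  have hSS : (hH.antipode ⊗ₘ hH.antipode) ≫ (CategoryTheory.inv hH.antipode ▷ H)
      = H ◁ hH.antipode := by
    rw [MonoidalCategory.tensorHom_def', Category.assoc, ← comp_whiskerRight,
      IsIso.hom_inv_id, id_whiskerRight, Category.comp_id]
  have hbb : (β_ H H).hom ≫ (β_ H H).hom = 𝟙 (H ⊗ H) := by
    nth_rewrite 2 [hc]; exact (β_ H H).hom_inv_id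
  rw [← cancel_epi hH.antipode, reassoc_of% (antipode_comul hH),
    reassoc_of% (antipode_counit hH)]
  slice_lhs 3 4 => rw [BraidedCategory.braiding_naturality]
  slice_lhs 2 3 => rw [hbb]
  slice_lhs 3 4 => rw [hSS]
  simpa using hH.antipode_right

/-! ### Multiplication operators -/

/-- Left multiplication-type operator attached to `γ : Hs ⟶ H ⊗ Hs`. -/
def Lop (m : H ⊗ H ⟶ H) (γ : Hs ⟶ H ⊗ Hs) : H ⊗ Hs ⟶ H ⊗ Hs :=
  (H ◁ γ) ≫ (α_ H H Hs).inv ≫ (m ▷ Hs)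

/-- The induced "product" on maps `Hs ⟶ H ⊗ Hs`. -/
def starOp (m : H ⊗ H ⟶ H) (γ γ' : Hs ⟶ H ⊗ Hs) : Hs ⟶ H ⊗ Hs :=
  γ ≫ (H ◁ γ') ≫ (α_ H H Hs).inv ≫ (m ▷ Hs)

theorem Lop_Lop (hH : HopfData H) (γ γ' : Hs ⟶ H ⊗ Hs) :
    Lop hH.mul γ ≫ Lop hH.mul γ' = Lop hH.mul (starOp hH.mul γ γ') := by
  have hassoc : (hH.mul ▷ H) ≫ hH.mul = (α_ H H H).hom ≫ (H ◁ hH.mul) ≫ hH.mul := by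
    have h := hH.mul_assoc; rwa [Iso.inv_comp_eq] at h
  simp only [Lop, starOp, MonoidalCategory.whiskerLeft_comp, Category.assoc]
  slice_lhs 3 4 => rw [← whisker_exchange]
  slice_lhs 4 5 => rw [associator_inv_naturality_left]
  slice_lhs 5 7 => rw [← comp_whiskerRight, hassoc]
  simp only [comp_whiskerRight, Category.assoc]
  monoidal

theorem Lop_unit (hH : HopfData H) :
    Lop (H := H) (Hs := Hs) hH.mul ((λ_ Hs).inv ≫ (hH.one ▷ Hs)) = 𝟙 (H ⊗ Hs) := by
  have hone : (H ◁ hH.one) ≫ hH.mul = (ρ_ H).hom := by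
    have h := hH.mul_one; rwa [Iso.inv_comp_eq, Category.comp_id] at h
  simp only [Lop, MonoidalCategory.whiskerLeft_comp, Category.assoc]
  slice_lhs 2 3 => rw [associator_inv_naturality_middle]
  slice_lhs 3 5 => rw [← comp_whiskerRight, hone]
  monoidal

/-! ### Currying -/

/-- Curry a morphism `Hs ⊗ H ⟶ H` to a morphism `Hs ⟶ H ⊗ Hs` using the coevaluation. -/
def curry (dd : DualData H Hs) (T : Hs ⊗ H ⟶ H) : Hs ⟶ H ⊗ Hs :=
  (ρ_ Hs).inv ≫ (Hs ◁ dd.b) ≫ (α_ Hs H Hs).inv ≫ (T ▷ Hs)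

theorem lamMor_eq (hH : HopfData H) (dd : DualData H Hs) :
    lamMor dd hH.mul hH.comul = Lop hH.mul (curry dd (actHat dd hH.comul)) := by
  simp only [lamMor, Lop, curry, actHat, MonoidalCategory.whiskerLeft_comp,
    comp_whiskerRight, Category.assoc]
  monoidal

theorem curry_d_one (hH : HopfData H) (dd : DualData H Hs) :
    curry dd (dd.d ≫ hH.one) = (λ_ Hs).inv ≫ (hH.one ▷ Hs) := by
  have h : (ρ_ Hs).inv ≫ (Hs ◁ dd.b) ≫ (α_ Hs H Hs).inv ≫ (dd.d ▷ Hs)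
      = (λ_ Hs).inv := by
    rw [← cancel_mono (λ_ Hs).hom]
    simpa [Category.assoc] using dd.triangle_left
  simp only [curry, comp_whiskerRight]
  slice_lhs 1 4 => rw [h]

/-- The sliding lemma: a braiding can be pulled through the evaluation. -/
theorem slide (dd : DualData H Hs) (Y : C) :
    ((β_ Hs Y).hom ▷ H) ≫ (α_ Y Hs H).hom ≫ (Y ◁ dd.d) ≫ (ρ_ Y).hom
      = (α_ Hs Y H).hom ≫ (Hs ◁ (β_ H Y).inv) ≫ (α_ Hs H Y).inv ≫
          (dd.d ▷ Y) ≫ (λ_ Y).hom := by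
  have n1 : (Y ◁ dd.d) = (β_ (Hs ⊗ H) Y).inv ≫ (dd.d ▷ Y) ≫ (β_ (𝟙_ C) Y).hom := by
    rw [Iso.eq_inv_comp]
    exact (BraidedCategory.braiding_naturality_left dd.d Y).symm
  rw [n1, BraidedCategory.braiding_tensor_left_inv]
  simp only [Category.assoc, Iso.hom_inv_id_assoc]
  slice_lhs 1 2 => rw [← comp_whiskerRight, Iso.hom_inv_id, id_whiskerRight]
  simp only [Category.id_comp, Category.assoc]
  rw [braiding_rightUnitor]

theorem caps_comm {X Y : C} (x : 𝟙_ C ⟶ X) (g : 𝟙_ C ⟶ Y) :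
    x ≫ (ρ_ X).inv ≫ (X ◁ g) = g ≫ (λ_ Y).inv ≫ (x ▷ Y) := by
  rw [rightUnitor_inv_naturality_assoc, leftUnitor_inv_naturality_assoc,
    ← whisker_exchange, ← unitors_inv_equal]

/-- The action `actHat` rewritten using the sliding lemma. -/
theorem actHat_eq (hH : HopfData H) (dd : DualData H Hs) :
    actHat dd hH.comul
      = (Hs ◁ (hH.comul ≫ (β_ H H).inv)) ≫ (α_ Hs H H).inv ≫
          (dd.d ▷ H) ≫ (λ_ H).hom := by
  have hsl := slide dd H
  simp only [actHat, MonoidalCategory.whiskerLeft_comp, Category.assoc]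
  rw [hsl]
  simp

/-- The triangle identity with a spectator strand. -/
theorem spectator_tri (dd : DualData H Hs) :
    (λ_ (H ⊗ H)).inv ≫ (dd.b ▷ (H ⊗ H)) ≫ (α_ H Hs (H ⊗ H)).hom ≫
        (H ◁ ((α_ Hs H H).inv ≫ (dd.d ▷ H) ≫ (λ_ H).hom))
      = 𝟙 (H ⊗ H) := by
  have h : (λ_ (H ⊗ H)).inv ≫ (dd.b ▷ (H ⊗ H)) ≫ (α_ H Hs (H ⊗ H)).hom ≫
        (H ◁ ((α_ Hs H H).inv ≫ (dd.d ▷ H) ≫ (λ_ H).hom))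
      = (((λ_ H).inv ≫ (dd.b ▷ H) ≫ (α_ H Hs H).hom ≫ (H ◁ dd.d) ≫ (ρ_ H).hom) ▷ H) := by
    monoidal
  rw [h, dd.triangle_right, id_whiskerRight]

/-- The mate of `actHat` is the (co-opposite) comultiplication. -/
theorem M_actHat (hH : HopfData H) (dd : DualData H Hs) :
    (λ_ H).inv ≫ (dd.b ▷ H) ≫ (α_ H Hs H).hom ≫ (H ◁ actHat dd hH.comul)
      = hH.comul ≫ (β_ H H).inv := by
  rw [actHat_eq hH dd]
  simp only [MonoidalCategory.whiskerLeft_comp]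
  slice_lhs 3 4 => rw [← associator_naturality_right]
  slice_lhs 2 3 => rw [← whisker_exchange]
  slice_lhs 1 2 => rw [← leftUnitor_inv_naturality]
  slice_lhs 4 5 => rw [← associator_naturality_right]
  slice_lhs 3 4 => rw [← whisker_exchange]
  slice_lhs 2 3 => rw [← leftUnitor_inv_naturality]
  slice_lhs 3 8 => rw [show (λ_ (H ⊗ H)).inv ≫ (dd.b ▷ (H ⊗ H)) ≫ (α_ H Hs (H ⊗ H)).hom ≫
      (H ◁ (α_ Hs H H).inv) ≫ (H ◁ (dd.d ▷ H)) ≫ (H ◁ (λ_ H).hom) = 𝟙 (H ⊗ H) from by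
      simpa [MonoidalCategory.whiskerLeft_comp, Category.assoc] using spectator_tri dd]
  simp

/-- Shifting the coevaluation across a curried morphism. -/
theorem mate_shift (dd : DualData H Hs) (T : Hs ⊗ H ⟶ H) :
    dd.b ≫ (H ◁ curry dd T)
      = dd.b ≫ (((λ_ H).inv ≫ (dd.b ▷ H) ≫ (α_ H Hs H).hom ≫ (H ◁ T)) ▷ Hs) ≫
          (α_ H H Hs).hom := by
  calc dd.b ≫ (H ◁ curry dd T)
      = dd.b ≫ (ρ_ (H ⊗ Hs)).inv ≫ ((H ⊗ Hs) ◁ dd.b) ≫ (α_ H Hs (H ⊗ Hs)).hom ≫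
          (H ◁ ((α_ Hs H Hs).inv ≫ (T ▷ Hs))) := by
        simp only [curry, MonoidalCategory.whiskerLeft_comp]
        congr 1
        monoidal
    _ = dd.b ≫ (λ_ (H ⊗ Hs)).inv ≫ (dd.b ▷ (H ⊗ Hs)) ≫ (α_ H Hs (H ⊗ Hs)).hom ≫
          (H ◁ ((α_ Hs H Hs).inv ≫ (T ▷ Hs))) := by
        rw [reassoc_of% (caps_comm dd.b dd.b)]
    _ = dd.b ≫ (((λ_ H).inv ≫ (dd.b ▷ H) ≫ (α_ H Hs H).hom ≫ (H ◁ T)) ▷ Hs) ≫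
          (α_ H H Hs).hom := by
        congr 1
        monoidal

theorem curry_post (dd : DualData H Hs) (T : Hs ⊗ H ⟶ H) (u : H ⟶ H) :
    curry dd (T ≫ u) = curry dd T ≫ (u ▷ Hs) := by
  simp [curry, comp_whiskerRight, Category.assoc]

theorem star_collapse (hH : HopfData H) (dd : DualData H Hs) (T : Hs ⊗ H ⟶ H) (u : H ⟶ H) :
    starOp hH.mul (curry dd T) (curry dd (actHat dd hH.comul ≫ u))
      = curry dd ((Hs ◁ (hH.comul ≫ (β_ H H).inv)) ≫ (α_ Hs H H).inv ≫
          (T ▷ H) ≫ (H ◁ u) ≫ hH.mul) := by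
  have hstep : ∀ {Z : C} (c : Hs ⟶ Z), curry dd T ≫ (H ◁ c)
      = (ρ_ Hs).inv ≫ (Hs ◁ (dd.b ≫ (H ◁ c))) ≫ (α_ Hs H Z).inv ≫ (T ▷ Z) := by
    intro Z c
    simp only [curry, Category.assoc]
    rw [← whisker_exchange]
    slice_lhs 3 4 => rw [← associator_inv_naturality_right]
    simp only [Category.assoc]
    rw [← MonoidalCategory.whiskerLeft_comp_assoc]
  have hmate : dd.b ≫ (H ◁ curry dd (actHat dd hH.comul))
      = dd.b ≫ ((hH.comul ≫ (β_ H H).inv) ▷ Hs) ≫ (α_ H H Hs).hom := by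
    rw [mate_shift dd, M_actHat hH dd]
  calc starOp hH.mul (curry dd T) (curry dd (actHat dd hH.comul ≫ u))
      = curry dd T ≫ (H ◁ curry dd (actHat dd hH.comul)) ≫ (H ◁ (u ▷ Hs)) ≫
          (α_ H H Hs).inv ≫ (hH.mul ▷ Hs) := by
        rw [starOp, curry_post dd (actHat dd hH.comul) u,
          MonoidalCategory.whiskerLeft_comp]
        simp only [Category.assoc]
    _ = (ρ_ Hs).inv ≫ (Hs ◁ (dd.b ≫ ((hH.comul ≫ (β_ H H).inv) ▷ Hs) ≫ (α_ H H Hs).hom)) ≫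
          (α_ Hs H (H ⊗ Hs)).inv ≫ (T ▷ (H ⊗ Hs)) ≫ (H ◁ (u ▷ Hs)) ≫
          (α_ H H Hs).inv ≫ (hH.mul ▷ Hs) := by
        rw [reassoc_of% (hstep (curry dd (actHat dd hH.comul))), hmate]
    _ = curry dd ((Hs ◁ (hH.comul ≫ (β_ H H).inv)) ≫ (α_ Hs H H).inv ≫
          (T ▷ H) ≫ (H ◁ u) ≫ hH.mul) := by
        simp only [curry, MonoidalCategory.whiskerLeft_comp, comp_whiskerRight,
          Category.assoc]
        monoidal

/-- The conjugated Yang–Baxter identity. -/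
theorem claim2 (hc : (β_ H H).hom = (β_ H H).inv) :
    (α_ H H H).hom ≫ (β_ (H ⊗ H) H).inv ≫ ((β_ H H).inv ▷ H)
      = (β_ H (H ⊗ H)).inv ≫ (H ◁ (β_ H H).hom) ≫ (α_ H H H).inv := by
  rw [BraidedCategory.braiding_tensor_left_inv, BraidedCategory.braiding_tensor_right_inv]
  simp only [← hc, Category.assoc]
  rw [← cancel_epi (α_ H H H).inv, ← cancel_mono (α_ H H H).hom]
  simp only [Category.assoc, Iso.inv_hom_id, Category.comp_id, Iso.inv_hom_id_assoc]
  simpa [Category.assoc] using BraidedCategory.yang_baxter H H H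

/-- The coassociativity/braid rearrangement. -/
theorem Qeq (hH : HopfData H) (hc : (β_ H H).hom = (β_ H H).inv) :
    hH.comul ≫ (β_ H H).inv ≫ (hH.comul ▷ H) ≫ ((β_ H H).inv ▷ H)
      = hH.comul ≫ (β_ H H).inv ≫ (H ◁ hH.comul) ≫ (H ◁ (β_ H H).hom) ≫
          (α_ H H H).inv := by
  have hco : hH.comul ≫ (H ◁ hH.comul)
      = hH.comul ≫ (hH.comul ▷ H) ≫ (α_ H H H).hom := hH.coassoc.symm
  slice_lhs 2 3 => rw [← BraidedCategory.braiding_inv_naturality_right]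
  simp only [Category.assoc]
  rw [reassoc_of% hco]
  slice_lhs 3 5 => rw [claim2 hc]
  slice_lhs 2 3 => rw [BraidedCategory.braiding_inv_naturality_left]
  simp only [Category.assoc]

/-- The key reduction, common core. -/
theorem Kred_core (hH : HopfData H) (dd : DualData H Hs)
    (hc : (β_ H H).hom = (β_ H H).inv) (v : H ⊗ H ⟶ H)
    (hv : hH.comul ≫ (β_ H H).hom ≫ v = hH.counit ≫ hH.one) :
    (Hs ◁ (hH.comul ≫ (β_ H H).inv)) ≫ (α_ Hs H H).inv ≫
        (actHat dd hH.comul ▷ H) ≫ v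
      = dd.d ≫ hH.one := by
  have shuffle : (Hs ◁ (α_ H H H).inv) ≫ (α_ Hs (H ⊗ H) H).inv ≫
        ((α_ Hs H H).inv ▷ H) ≫ ((dd.d ▷ H) ▷ H) ≫ ((λ_ H).hom ▷ H) ≫ v
      = (Hs ◁ (H ◁ v)) ≫ (α_ Hs H H).inv ≫ (dd.d ▷ H) ≫ (λ_ H).hom := by
    have h2 : (Hs ◁ (H ◁ v)) ≫ (α_ Hs H H).inv ≫ (dd.d ▷ H) ≫ (λ_ H).hom
        = (α_ Hs H (H ⊗ H)).inv ≫ (dd.d ▷ (H ⊗ H)) ≫ (λ_ (H ⊗ H)).hom ≫ v := by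
      rw [associator_inv_naturality_right_assoc, whisker_exchange_assoc,
        leftUnitor_naturality]
    rw [h2]
    monoidal
  have hQ := congrArg (fun t : H ⟶ (H ⊗ H) ⊗ H => Hs ◁ t) (Qeq hH hc)
  simp only [MonoidalCategory.whiskerLeft_comp] at hQ
  have hv2 := congrArg (fun t : H ⟶ H => Hs ◁ (H ◁ t)) hv
  simp only [MonoidalCategory.whiskerLeft_comp] at hv2
  have hcu : hH.comul ≫ (hH.counit ▷ H) = (λ_ H).inv := by
    rw [← cancel_mono (λ_ H).hom]; simpa using hH.counit_comul
  have hβu : (β_ H (𝟙_ C)).inv = (λ_ H).hom ≫ (ρ_ H).inv := by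
    rw [← cancel_epi (β_ H (𝟙_ C)).hom, Iso.hom_inv_id, braiding_leftUnitor_assoc]
    simp
  have hεmove := congrArg (fun t : H ⊗ H ⟶ H ⊗ (𝟙_ C) => Hs ◁ t)
    (BraidedCategory.braiding_inv_naturality_left hH.counit H).symm
  simp only [MonoidalCategory.whiskerLeft_comp] at hεmove
  have hcu2 := congrArg (fun t : H ⟶ (𝟙_ C) ⊗ H => Hs ◁ t) hcu
  simp only [MonoidalCategory.whiskerLeft_comp] at hcu2
  rw [actHat_eq hH dd]
  simp only [MonoidalCategory.whiskerLeft_comp, comp_whiskerRight, Category.assoc]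
  rw [← associator_inv_naturality_middle_assoc, ← associator_inv_naturality_middle_assoc]
  rw [reassoc_of% hQ]
  rw [shuffle]
  rw [reassoc_of% hv2]
  rw [reassoc_of% hεmove]
  rw [reassoc_of% hcu2]
  rw [hβu]
  rw [associator_inv_naturality_right_assoc, whisker_exchange_assoc,
    leftUnitor_naturality]
  monoidal

/-- The key reduction, right-handed version. -/
theorem Kred (hH : HopfData H) (dd : DualData H Hs)
    (hc : (β_ H H).hom = (β_ H H).inv) (u : H ⟶ H)
    (hu : hH.comul ≫ (β_ H H).hom ≫ (H ◁ u) ≫ hH.mul = hH.counit ≫ hH.one) :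
    (Hs ◁ (hH.comul ≫ (β_ H H).inv)) ≫ (α_ Hs H H).inv ≫
        (actHat dd hH.comul ▷ H) ≫ (H ◁ u) ≫ hH.mul
      = dd.d ≫ hH.one := by
  have h := Kred_core hH dd hc ((H ◁ u) ≫ hH.mul) (by simpa [Category.assoc] using hu)
  simpa [Category.assoc] using h

/-- The key reduction, left-handed version. -/
theorem Kred' (hH : HopfData H) (dd : DualData H Hs)
    (hc : (β_ H H).hom = (β_ H H).inv) (u : H ⟶ H)
    (hu : hH.comul ≫ (β_ H H).hom ≫ (u ▷ H) ≫ hH.mul = hH.counit ≫ hH.one) :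
    (Hs ◁ (hH.comul ≫ (β_ H H).inv)) ≫ (α_ Hs H H).inv ≫
        ((actHat dd hH.comul ≫ u) ▷ H) ≫ (H ◁ 𝟙 H) ≫ hH.mul
      = dd.d ≫ hH.one := by
  have h := Kred_core hH dd hc ((u ▷ H) ≫ hH.mul) (by simpa [Category.assoc] using hu)
  simpa [comp_whiskerRight, MonoidalCategory.whiskerLeft_id, Category.assoc] using h

end LamAux

open PaperDefs in
/-- Lemma 1.6: if the antipode of `H` is invertible, then the algebra morphism
`λ : H # H^ ⟶ H ⊗̄ H^` is an isomorphism. -/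
theorem stmt_6 {C : Type*} [CategoryTheory.Category C]
    [CategoryTheory.MonoidalCategory C] [CategoryTheory.BraidedCategory C]
    (H Hs : C) (hH : HopfData H) (dd : DualData H Hs)
    (hc : (β_ H H).hom = (β_ H H).inv)
    (hS : CategoryTheory.IsIso hH.antipode) :
    CategoryTheory.IsIso (lamMor dd hH.mul hH.comul) := by
    classical
  letI : IsIso hH.antipode := hS
  let T := PaperDefs.actHat dd hH.comul
  let u := CategoryTheory.inv hH.antipode
  have hlam : lamMor dd hH.mul hH.comul = LamAux.Lop hH.mul (LamAux.curry dd T) :=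
    LamAux.lamMor_eq hH dd
  have hA : LamAux.Lop hH.mul (LamAux.curry dd T) ≫
      LamAux.Lop hH.mul (LamAux.curry dd (T ≫ u)) = 𝟙 (H ⊗ Hs) := by
    rw [LamAux.Lop_Lop hH, LamAux.star_collapse hH dd T u,
      LamAux.Kred hH dd hc u (LamAux.copS_right hH hc),
      LamAux.curry_d_one hH dd, LamAux.Lop_unit hH]
  have hB : LamAux.Lop hH.mul (LamAux.curry dd (T ≫ u)) ≫
      LamAux.Lop hH.mul (LamAux.curry dd T) = 𝟙 (H ⊗ Hs) := by
    have h1 : LamAux.curry dd T = LamAux.curry dd (T ≫ 𝟙 H) := by rw [Category.comp_id]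
    rw [h1, LamAux.Lop_Lop hH, LamAux.star_collapse hH dd (T ≫ u) (𝟙 H),
      LamAux.Kred' hH dd hc u (LamAux.copS_left hH hc),
      LamAux.curry_d_one hH dd, LamAux.Lop_unit hH]
  rw [hlam]
  exact ⟨LamAux.Lop hH.mul (LamAux.curry dd (T ≫ u)), hA, hB⟩
end
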